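/- arXiv:1112.6014 — 4 statements merged into one kernel-verified Lean document; each statement's English description precedes it below -/
import Mathlib

section
/- Suppose n = 2^m − 1 for some integer m ≥ 0. Then the number of 321-avoiding permutations of [n] with exactly 0 descents equals 1, and for every k ≥ 1 the number of 321-avoiding permutations of [n] with exactly k descents is even. -/
open Finset MvPolynomial

/-- `σ` avoids the pattern 321. -/
def Avoids321 {n : ℕ} (σ : Equiv.Perm (Fin n)) : Prop :=
  ¬ ∃ i j k : Fin n, i < j ∧ j < k ∧ σ k < σ j ∧ σ j < σ i

instance {n : ℕ} : DecidablePred (Avoids321 (n := n)) := fun σ => by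
  unfold Avoids321; infer_instance

/-- The set of 321-avoiding permutations of `{1,…,n}` (modelled on `Fin n`). -/
def Av (n : ℕ) : Finset (Equiv.Perm (Fin n)) := univ.filter Avoids321

/-- The number of inversions of a permutation. -/
def invPerm {n : ℕ} (σ : Equiv.Perm (Fin n)) : ℕ :=
  (univ.filter (fun p : Fin n × Fin n => p.1 < p.2 ∧ σ p.2 < σ p.1)).card

/-- Position `i` is a left-right maximum of `σ`. -/
def IsLRMax {n : ℕ} (σ : Equiv.Perm (Fin n)) (i : Fin n) : Prop :=
  ∀ j, j ≤ i → σ j ≤ σ i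

instance {n : ℕ} (σ : Equiv.Perm (Fin n)) : DecidablePred (IsLRMax σ) := fun i => by
  unfold IsLRMax; infer_instance

/-- The number of left-right maxima of `σ`. -/
def lrm {n : ℕ} (σ : Equiv.Perm (Fin n)) : ℕ := (univ.filter (IsLRMax σ)).card

/-- The number of fixed points of `σ`. -/
def fixPerm {n : ℕ} (σ : Equiv.Perm (Fin n)) : ℕ := (univ.filter (fun i => σ i = i)).card

/-- The number of excedances of `σ`. -/
def excPerm {n : ℕ} (σ : Equiv.Perm (Fin n)) : ℕ := (univ.filter (fun i => i < σ i)).card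

/-- The descent set of `σ`: `i` is in it iff `σ` descends from position `i+1` to `i+2`
(0-based index `i` corresponds to the 1-based descent position `i+1`). -/
def DesPerm {n : ℕ} (σ : Equiv.Perm (Fin n)) : Finset (Fin n) :=
  univ.filter (fun i => ∃ h : i.val + 1 < n, σ ⟨i.val + 1, h⟩ < σ i)

/-- The number of descents of `σ`. -/
def desPerm {n : ℕ} (σ : Equiv.Perm (Fin n)) : ℕ := (DesPerm σ).card

/-- The major index of `σ` (descents at 1-based positions). -/
def majPerm {n : ℕ} (σ : Equiv.Perm (Fin n)) : ℕ := ∑ i ∈ DesPerm σ, (i.val + 1)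

/-- Number of `true` letters among the first `i` letters of the word `P`. -/
def UpCt {m : ℕ} (P : Fin m → Bool) (i : ℕ) : ℕ :=
  (univ.filter (fun j : Fin m => j.val < i ∧ P j = true)).card

/-- Number of `false` letters among the first `i` letters of the word `P`. -/
def DownCt {m : ℕ} (P : Fin m → Bool) (i : ℕ) : ℕ :=
  (univ.filter (fun j : Fin m => j.val < i ∧ P j = false)).card

/-- A word (with `true` = U, `false` = D) is a Dyck word: every prefix has at least as
many U's as D's, and the total numbers of U's and D's agree. -/
def IsDyck {m : ℕ} (P : Fin m → Bool) : Prop :=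
  (∀ i, i ≤ m → DownCt P i ≤ UpCt P i) ∧ UpCt P m = DownCt P m

instance {m : ℕ} : DecidablePred (IsDyck (m := m)) := fun P => by
  unfold IsDyck; infer_instance

/-- The Dyck paths of semilength `n`, as words of length `2n`. -/
def DyckSet (n : ℕ) : Finset (Fin (2 * n) → Bool) := univ.filter IsDyck

/-- Valleys (descents of the word, i.e. factors `DU`), recorded by the 0-based
index of the `D` step. -/
def Valleys {m : ℕ} (P : Fin m → Bool) : Finset (Fin m) :=
  univ.filter (fun j => P j = false ∧ ∃ h : j.val + 1 < m, P ⟨j.val + 1, h⟩ = true)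

/-- `des` of a path: the number of valleys. -/
def desPath {m : ℕ} (P : Fin m → Bool) : ℕ := (Valleys P).card

/-- `maj` of a path: the sum of the (1-based) positions of the descents. -/
def majPath {m : ℕ} (P : Fin m → Bool) : ℕ := ∑ j ∈ Valleys P, (j.val + 1)

/-- `α(P) = Σ_{i ∈ Des P} |p_i(P)|_U`. -/
def alphaPath {m : ℕ} (P : Fin m → Bool) : ℕ := ∑ j ∈ Valleys P, UpCt P (j.val + 1)

/-- `β(P) = Σ_{i ∈ Des P} |p_i(P)|_D`. -/
def betaPath {m : ℕ} (P : Fin m → Bool) : ℕ := ∑ j ∈ Valleys P, DownCt P (j.val + 1)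

/-- Peaks (factors `UD`), recorded by the 0-based index of the `U` step. -/
def Peaks {m : ℕ} (P : Fin m → Bool) : Finset (Fin m) :=
  univ.filter (fun j => P j = true ∧ ∃ h : j.val + 1 < m, P ⟨j.val + 1, h⟩ = false)

/-- The number of peaks of `P`. -/
def npea {m : ℕ} (P : Fin m → Bool) : ℕ := (Peaks P).card

/-- `spea P = Σ_p (HT(p) - 1)` over peaks `p`, where `HT` is the height of a peak. -/
def spea {m : ℕ} (P : Fin m → Bool) : ℕ :=
  ∑ j ∈ Peaks P, (UpCt P (j.val + 1) - DownCt P (j.val + 1) - 1)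

/-- The height of the path after `i` steps. -/
def htAt {m : ℕ} (P : Fin m → Bool) (i : ℕ) : ℤ := (UpCt P i : ℤ) - (DownCt P i : ℤ)

/-- The start of the tunnel of the valley whose lowest lattice point comes after
`k` steps: the largest `m < k` at which the path has the same height. -/
def tunnelStart {m : ℕ} (P : Fin m → Bool) (k : ℕ) : ℕ :=
  ((Finset.range k).filter (fun j => htAt P j = htAt P k)).sup id

/-- `stun P`: the sum over all valleys of the semilengths of their tunnels. -/
def stun {m : ℕ} (P : Fin m → Bool) : ℕ :=
  ∑ j ∈ Valleys P, (j.val + 1 - tunnelStart P (j.val + 1)) / 2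

/-- A parallelogram polyomino: a pair `(U,V)` of `N/E`-paths (`true` = N, `false` = E)
of the same length, with the same endpoints, such that `U` stays strictly above `V`
except at the endpoints (i.e. every proper nonempty prefix of `U` contains strictly
more `N`-steps than the corresponding prefix of `V`).  As noted by Fürlinger and
Hofbauer, the lower path begins with an `E`-step and the upper path ends with an
`E`-step; this is automatic for `m ≥ 2` and fixes the convention in the degenerate
case `m = 1`. -/
def IsParaPoly {m : ℕ} (U V : Fin m → Bool) : Prop :=
  UpCt U m = UpCt V m ∧ (∀ i, i < m → 1 ≤ i → UpCt V i < UpCt U i) ∧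
    UpCt V 1 = 0 ∧ UpCt U m = UpCt U (m - 1)

instance {m : ℕ} (U V : Fin m → Bool) : Decidable (IsParaPoly U V) := by
  unfold IsParaPoly; infer_instance

/-- The parallelogram polyominoes of size `n`. -/
def ParaSet (n : ℕ) : Finset ((Fin n → Bool) × (Fin n → Bool)) :=
  univ.filter (fun UV => IsParaPoly UV.1 UV.2)

/-- A shortened polyomino: a pair `(P,Q)` of `N/E`-paths of the same length with the
same endpoints such that `P` stays weakly above `Q` and the two paths share no
`N`-steps (an `N`-step is shared exactly when it occurs at the same index with equal
prefix `N`-counts). -/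
def IsShortPoly {m : ℕ} (P Q : Fin m → Bool) : Prop :=
  UpCt P m = UpCt Q m ∧ (∀ i, i ≤ m → UpCt Q i ≤ UpCt P i) ∧
    ∀ j : Fin m, UpCt P j.val = UpCt Q j.val → ¬(P j = true ∧ Q j = true)

instance {m : ℕ} (P Q : Fin m → Bool) : Decidable (IsShortPoly P Q) := by
  unfold IsShortPoly; infer_instance

/-- The shortened polyominoes of size `n`. -/
def ShortSet (n : ℕ) : Finset ((Fin n → Bool) × (Fin n → Bool)) :=
  univ.filter (fun PQ => IsShortPoly PQ.1 PQ.2)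

/-- The sum, over the `E`-steps of a path, of their heights (`N`-count before the step). -/
def eSum {m : ℕ} (W : Fin m → Bool) : ℕ :=
  ∑ j ∈ univ.filter (fun j : Fin m => W j = false), UpCt W j.val

/-- The area between the upper path `U` and the lower path `V`. -/
def areaPoly {m : ℕ} (U V : Fin m → Bool) : ℕ := eSum U - eSum V

/-- The number of columns spanned: the number of `E`-steps of the path. -/
def colPoly {m : ℕ} (W : Fin m → Bool) : ℕ := (univ.filter (fun j : Fin m => W j = false)).card

/-- `I_n(q,t) = Σ_{σ ∈ Av_n(321)} q^{inv σ} t^{lrm σ}`, with `q = X 0`, `t = X 1`. -/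
noncomputable def IPoly (n : ℕ) : MvPolynomial (Fin 2) ℤ :=
  ∑ σ ∈ Av n, X 0 ^ invPerm σ * X 1 ^ lrm σ

/-- `M_n(q,t) = Σ_{σ ∈ Av_n(321)} q^{maj σ} t^{des σ}`, with `q = X 0`, `t = X 1`. -/
noncomputable def MPoly (n : ℕ) : MvPolynomial (Fin 2) ℤ :=
  ∑ σ ∈ Av n, X 0 ^ majPerm σ * X 1 ^ desPerm σ

/-- `I_n(q,t,x) = Σ_{σ ∈ Av_n(321)} q^{inv σ} t^{lrm σ} x^{fix σ}`,
with `q = X 0`, `t = X 1`, `x = X 2`. -/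
noncomputable def IPoly3 (n : ℕ) : MvPolynomial (Fin 3) ℤ :=
  ∑ σ ∈ Av n, X 0 ^ invPerm σ * X 1 ^ lrm σ * X 2 ^ fixPerm σ

/-- `C_n(a,b;t) = Σ_{P ∈ D_n} a^{α(P)} b^{β(P)} t^{des P}`,
with `a = X 0`, `b = X 1`, `t = X 2`. -/
noncomputable def CPoly (n : ℕ) : MvPolynomial (Fin 3) ℤ :=
  ∑ P ∈ DyckSet n, X 0 ^ alphaPath P * X 1 ^ betaPath P * X 2 ^ desPath P

/-- `P_n(q,t) = Σ_{(U,V) ∈ 𝒫_n} q^{area(U,V)} t^{col(U,V)}`, with `q = X 0`, `t = X 1`. -/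
noncomputable def PPoly (n : ℕ) : MvPolynomial (Fin 2) ℤ :=
  ∑ UV ∈ ParaSet n, X 0 ^ areaPoly UV.1 UV.2 * X 1 ^ colPoly UV.1

/-- `I_n(-1,t) = Σ_{σ ∈ Av_n(321)} (-1)^{inv σ} t^{lrm σ} ∈ ℤ[t]`. -/
noncomputable def ISign (n : ℕ) : Polynomial ℤ :=
  ∑ σ ∈ Av n, Polynomial.C ((-1 : ℤ) ^ invPerm σ) * Polynomial.X ^ lrm σ

/-- Substitution `t ↦ q^k t` for polynomials in `q = X 0`, `t = X 1`. -/
noncomputable def subT (k : ℕ) (f : MvPolynomial (Fin 2) ℤ) : MvPolynomial (Fin 2) ℤ :=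
  bind₁ (fun i : Fin 2 => if i = 0 then X 0 else X 0 ^ k * X 1) f

/-- Substitution `t ↦ u` (third variable) for polynomials in `a = X 0`, `b = X 1`, `t = X 2`. -/
noncomputable def subT3 (u : MvPolynomial (Fin 3) ℤ) (f : MvPolynomial (Fin 3) ℤ) :
    MvPolynomial (Fin 3) ℤ :=
  bind₁ (fun i : Fin 3 => if i = 2 then u else X i) f

/-- Substitution `x ↦ 1` (third variable) for polynomials in `q = X 0`, `t = X 1`, `x = X 2`. -/
noncomputable def subX1 (f : MvPolynomial (Fin 3) ℤ) : MvPolynomial (Fin 3) ℤ :=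
  bind₁ (fun i : Fin 3 => if i = 2 then 1 else X i) f

/-- `val σ`: indicator vector of left-right maximum values (`val σ i = 1` iff the value `i`
occurs at a left-right maximum position of `σ`). -/
def valVec {n : ℕ} (σ : Equiv.Perm (Fin n)) (i : Fin n) : ℕ :=
  if ∃ j, IsLRMax σ j ∧ σ j = i then 1 else 0

/-- `pos σ`: indicator vector of left-right maximum positions. -/
def posVec {n : ℕ} (σ : Equiv.Perm (Fin n)) (i : Fin n) : ℕ :=
  if IsLRMax σ i then 1 else 0


/-!
Reverse-complement `σ ↦ rc σ`, `rc σ (i) = n + 1 - σ (n + 1 - i)`, is an involution of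
`Av_n(321)` preserving `des`, so the number of `σ` with `k` descents has the parity of the number
of `rc`-symmetric ones. For `n = 2s + 1` a symmetric 321-avoider fixes the middle point and maps
`[s]` to itself (a larger value there would form a `321` with the middle point and its mirror
image), so it is the symmetric extension of some `τ ∈ Av_s(321)`, and it has `2 des τ` descents.
Since `2^(m+1) - 1 = 2 (2^m - 1) + 1`, induction on `m` gives evenness for `k ≥ 1`; the identity
is the only permutation without descents.
-/

theorem Finset.even_card_iff_even_card_fixed {α : Type*} [DecidableEq α] {s : Finset α}
    (g : α → α) (hmaps : ∀ x ∈ s, g x ∈ s) (hinv : ∀ x ∈ s, g (g x) = x) :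
    Even s.card ↔ Even (s.filter fun x => g x = x).card := by
  have hmoved : Even (s.filter fun x => g x ≠ x).card := by
    rw [← ZMod.natCast_eq_zero_iff_even, card_filter, Nat.cast_sum]
    -- in `ZMod 2` the two points of each orbit `{x, g x}` of size two cancel
    refine sum_involution (fun x _ => g x) (fun x hx => ?_) (fun x _ hx => ?_)
      hmaps hinv
    · by_cases hfix : g x = x
      · simp [hfix]
      · have : g (g x) ≠ g x := by rw [hinv x hx]; exact Ne.symm hfix
        simp only [hfix, this, ne_eq, not_false_eq_true, if_true, Nat.cast_one]
        decide
    · intro hfix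
      simp [hfix] at hx
  rw [← card_filter_add_card_filter_not (fun x => g x = x), Nat.even_add]
  simp only [ne_eq] at hmoved
  simp [hmoved]

namespace Equiv.Perm

variable {n : ℕ} (σ : Perm (Fin n))

/-- `σ` extended by the identity to a bijection of `ℕ`, so that positions and values at the
boundary `n` need no special treatment. -/
def natApply (i : ℕ) : ℕ := if h : i < n then σ ⟨i, h⟩ else i

variable {σ}

theorem natApply_of_lt {i : ℕ} (h : i < n) : σ.natApply i = σ ⟨i, h⟩ := dif_pos h

theorem natApply_of_le {i : ℕ} (h : n ≤ i) : σ.natApply i = i := dif_neg h.not_gt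

@[simp]
theorem natApply_fin (i : Fin n) : σ.natApply i = σ i := natApply_of_lt i.2

theorem natApply_lt_iff {i : ℕ} : σ.natApply i < n ↔ i < n := by
  by_cases h : i < n
  · simp [natApply_of_lt h, h]
  · simp [natApply_of_le (not_lt.mp h), h]

theorem natApply_le_iff {i : ℕ} : σ.natApply i ≤ n ↔ i ≤ n := by
  by_cases h : i < n
  · simp only [natApply_lt_iff.mpr h, h, le_of_lt]
  · simp [natApply_of_le (not_lt.mp h)]

theorem natApply_injective : Function.Injective σ.natApply := by
  intro i j hij
  by_cases hi : i < n <;> by_cases hj : j < n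
  · rw [natApply_of_lt hi, natApply_of_lt hj] at hij
    simpa using σ.injective (Fin.ext hij)
  · have := natApply_lt_iff (σ := σ).mpr hi
    rw [hij, natApply_of_le (not_lt.mp hj)] at this
    omega
  · have := natApply_lt_iff (σ := σ).mpr hj
    rw [← hij, natApply_of_le (not_lt.mp hi)] at this
    omega
  · rwa [natApply_of_le (not_lt.mp hi), natApply_of_le (not_lt.mp hj)] at hij

theorem ext_natApply {τ : Perm (Fin n)} (h : ∀ i < n, σ.natApply i = τ.natApply i) :
    σ = τ := by
  ext i
  simpa using h i i.2

noncomputable def ofNatFun (n : ℕ) (f : ℕ → ℕ) (hmaps : ∀ i < n, f i < n)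
    (hinj : Set.InjOn f (Set.Iio n)) : Perm (Fin n) :=
  Equiv.ofBijective (fun i => ⟨f i, hmaps i i.2⟩)
    (Finite.injective_iff_bijective.mp fun i j hij =>
      Fin.ext (hinj i.2 j.2 (congrArg Fin.val hij)))

theorem natApply_ofNatFun {f : ℕ → ℕ} {hmaps : ∀ i < n, f i < n}
    {hinj : Set.InjOn f (Set.Iio n)} {i : ℕ} (h : i < n) :
    (ofNatFun n f hmaps hinj).natApply i = f i := by
  rw [natApply_of_lt h]
  rfl

variable (σ) in
def natDes : Finset ℕ :=
  (range (n - 1)).filter fun d => σ.natApply (d + 1) < σ.natApply d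

theorem mem_natDes {d : ℕ} :
    d ∈ σ.natDes ↔ d + 1 < n ∧ σ.natApply (d + 1) < σ.natApply d := by
  rw [natDes, mem_filter, mem_range, Nat.lt_sub_iff_add_lt]

theorem desPerm_eq_card_natDes : desPerm σ = σ.natDes.card := by
  have : σ.natDes = (DesPerm σ).image Fin.val := by
    ext d
    simp only [mem_natDes, DesPerm, mem_image, mem_filter, mem_univ, true_and]
    constructor
    · rintro ⟨hd, hlt⟩
      refine ⟨⟨d, by omega⟩, ⟨hd, ?_⟩, rfl⟩
      rwa [natApply_of_lt hd, natApply_of_lt (by omega)] at hlt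
    · rintro ⟨i, ⟨hi, hlt⟩, rfl⟩
      exact ⟨hi, by rwa [natApply_of_lt hi, natApply_fin]⟩
  rw [desPerm, this, card_image_of_injective _ Fin.val_injective]

variable (σ) in
theorem desPerm_le : desPerm σ ≤ n := by
  simpa [desPerm] using card_le_univ (DesPerm σ)

theorem eq_one_of_desPerm_eq_zero (h : desPerm σ = 0) : σ = 1 := by
  rw [desPerm_eq_card_natDes, card_eq_zero] at h
  have hmono : StrictMono σ.natApply := by
    refine strictMono_nat_of_lt_succ fun d => ?_
    by_cases hd : d + 1 < n
    · have hnot : ¬ σ.natApply (d + 1) < σ.natApply d := fun hlt =>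
        by simpa [h] using mem_natDes.mpr ⟨hd, hlt⟩
      exact lt_of_le_of_ne (not_lt.mp hnot) (natApply_injective.ne (by omega))
    · rw [natApply_of_le (not_lt.mp hd)]
      by_cases hd' : d < n
      · exact (natApply_lt_iff.mpr hd').trans_le (not_lt.mp hd)
      · rw [natApply_of_le (not_lt.mp hd')]
        omega
  have hmono' : StrictMono σ := fun i j hij => by
    have := hmono (Fin.lt_def.mp hij)
    rwa [natApply_fin, natApply_fin, ← Fin.lt_def] at this
  ext i
  rw [hmono'.apply_eq]
  rfl

theorem desPerm_one : desPerm (1 : Perm (Fin n)) = 0 := by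
  simp [desPerm, DesPerm, Fin.lt_def]

/-- Extending `σ` by the identity creates no new `321` pattern, since every value beyond `n`
exceeds all values before it. -/
theorem avoids321_iff : Avoids321 σ ↔ ∀ a b c, a < b → b < c →
    ¬ (σ.natApply c < σ.natApply b ∧ σ.natApply b < σ.natApply a) := by
  constructor
  · rintro h a b c hab hbc ⟨hcb, hba⟩
    by_cases hc : c < n
    · refine h ⟨⟨a, by omega⟩, ⟨b, by omega⟩, ⟨c, hc⟩, hab, hbc, ?_, ?_⟩
      · rwa [natApply_of_lt hc, natApply_of_lt (by omega)] at hcb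
      · rwa [natApply_of_lt (by omega), natApply_of_lt (by omega)] at hba
    · rw [natApply_of_le (not_lt.mp hc)] at hcb
      by_cases hb : b < n
      · have := natApply_lt_iff (σ := σ) |>.mpr hb
        omega
      · rw [natApply_of_le (not_lt.mp hb)] at hcb
        omega
  · rintro h ⟨i, j, k, hij, hjk, hkj, hji⟩
    exact h i j k hij hjk ⟨by simpa using hkj, by simpa using hji⟩

variable (σ) in
def revCompl : Perm (Fin n) := Fin.revPerm * σ * Fin.revPerm

theorem revCompl_apply (i : Fin n) : σ.revCompl i = Fin.rev (σ (Fin.rev i)) := rfl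

@[simp]
theorem revCompl_revCompl : σ.revCompl.revCompl = σ := by
  ext i
  simp [revCompl_apply]

theorem _root_.Avoids321.revCompl (h : Avoids321 σ) : Avoids321 σ.revCompl := by
  rintro ⟨i, j, k, hij, hjk, hkj, hji⟩
  rw [revCompl_apply, revCompl_apply, Fin.rev_lt_rev] at hkj hji
  exact h ⟨k.rev, j.rev, i.rev, Fin.rev_lt_rev.mpr hjk, Fin.rev_lt_rev.mpr hij, hji, hkj⟩

theorem natApply_revCompl {d : ℕ} (h : d < n) :
    σ.revCompl.natApply d = n - 1 - σ.natApply (n - 1 - d) := by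
  have hrev : (⟨d, h⟩ : Fin n).rev = ⟨n - 1 - d, by omega⟩ := Fin.ext (by simp; omega)
  rw [natApply_of_lt h, natApply_of_lt (by omega), revCompl_apply, Fin.val_rev, hrev]
  omega

theorem mem_natDes_revCompl {d : ℕ} :
    d ∈ σ.revCompl.natDes ↔ d + 1 < n ∧ n - 2 - d ∈ σ.natDes := by
  rw [mem_natDes, mem_natDes]
  by_cases hd : d + 1 < n
  · have b1 := natApply_lt_iff (σ := σ) |>.mpr (show n - 1 - d < n by omega)
    have b2 := natApply_lt_iff (σ := σ) |>.mpr (show n - 2 - d < n by omega)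
    rw [natApply_revCompl hd, natApply_revCompl (by omega),
      show n - 1 - (d + 1) = n - 2 - d by omega, show n - 2 - d + 1 = n - 1 - d by omega]
    omega
  · simp [hd]

theorem desPerm_revCompl : desPerm σ.revCompl = desPerm σ := by
  rw [desPerm_eq_card_natDes, desPerm_eq_card_natDes]
  refine card_nbij' (n - 2 - ·) (n - 2 - ·) (fun d hd => ?_) (fun d hd => ?_)
    (fun d hd => ?_) (fun d hd => ?_)
  · exact (mem_natDes_revCompl.mp hd).2
  · have hd := mem_natDes.mp hd
    simp only
    exact mem_natDes_revCompl.mpr ⟨by omega, by rwa [show n - 2 - (n - 2 - d) = d by omega]⟩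
  · have := (mem_natDes_revCompl.mp hd).1
    simp only
    omega
  · have := (mem_natDes.mp hd).1
    simp only
    omega

section Double

variable {s : ℕ} (τ : Perm (Fin s))

def doubleFun (i : ℕ) : ℕ :=
  if i ≤ s then τ.natApply i else 2 * s - τ.natApply (2 * s - i)

variable {τ}

theorem doubleFun_of_le {i : ℕ} (h : i ≤ s) : τ.doubleFun i = τ.natApply i := if_pos h

theorem doubleFun_of_lt {i : ℕ} (h : s < i) :
    τ.doubleFun i = 2 * s - τ.natApply (2 * s - i) := if_neg h.not_ge

theorem doubleFun_le {i : ℕ} (h : i ≤ s) : τ.doubleFun i ≤ s := by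
  rw [doubleFun_of_le h]
  exact natApply_le_iff.mpr h

theorem lt_doubleFun {i : ℕ} (h : s < i) (h' : i < 2 * s + 1) : s < τ.doubleFun i := by
  have := natApply_lt_iff (σ := τ) |>.mpr (show 2 * s - i < s by omega)
  rw [doubleFun_of_lt h]
  omega

theorem doubleFun_lt {i : ℕ} (h : i < 2 * s + 1) : τ.doubleFun i < 2 * s + 1 := by
  rcases le_or_gt i s with hi | hi
  · have := doubleFun_le (τ := τ) hi
    omega
  · rw [doubleFun_of_lt hi]
    omega

theorem doubleFun_injOn : Set.InjOn τ.doubleFun (Set.Iio (2 * s + 1)) := by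
  intro i hi j hj hij
  simp only [Set.mem_Iio] at hi hj
  rcases le_or_gt i s with his | his <;> rcases le_or_gt j s with hjs | hjs
  · rw [doubleFun_of_le his, doubleFun_of_le hjs] at hij
    exact natApply_injective hij
  · have := doubleFun_le (τ := τ) his
    have := lt_doubleFun (τ := τ) hjs hj
    omega
  · have := lt_doubleFun (τ := τ) his hi
    have := doubleFun_le (τ := τ) hjs
    omega
  · have b1 := natApply_lt_iff (σ := τ) |>.mpr (show 2 * s - i < s by omega)
    have b2 := natApply_lt_iff (σ := τ) |>.mpr (show 2 * s - j < s by omega)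
    rw [doubleFun_of_lt his, doubleFun_of_lt hjs] at hij
    have := natApply_injective (show τ.natApply (2 * s - i) = τ.natApply (2 * s - j) by omega)
    omega

theorem doubleFun_two_mul_sub {i : ℕ} (h : i < 2 * s + 1) :
    τ.doubleFun (2 * s - i) = 2 * s - τ.doubleFun i := by
  rcases lt_trichotomy i s with hi | rfl | hi
  · rw [doubleFun_of_lt (show s < 2 * s - i by omega), doubleFun_of_le hi.le,
      show 2 * s - (2 * s - i) = i by omega]
  · rw [show 2 * i - i = i by omega, doubleFun_of_le le_rfl, natApply_of_le le_rfl]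
    omega
  · have := natApply_lt_iff (σ := τ) |>.mpr (show 2 * s - i < s by omega)
    rw [doubleFun_of_le (show 2 * s - i ≤ s by omega), doubleFun_of_lt hi]
    omega

variable (τ) in
/-- The unique reverse-complement symmetric permutation of `[2s+1]` that extends `τ`. -/
noncomputable def rcDouble : Perm (Fin (2 * s + 1)) :=
  ofNatFun (2 * s + 1) τ.doubleFun (fun _ => doubleFun_lt) doubleFun_injOn

theorem natApply_rcDouble {i : ℕ} (h : i < 2 * s + 1) :
    τ.rcDouble.natApply i = τ.doubleFun i :=
  natApply_ofNatFun h

theorem revCompl_rcDouble : τ.rcDouble.revCompl = τ.rcDouble := by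
  refine ext_natApply fun i hi => ?_
  have := doubleFun_lt (τ := τ) hi
  rw [natApply_revCompl hi, natApply_rcDouble (by omega), natApply_rcDouble hi,
    show 2 * s + 1 - 1 - i = 2 * s - i by omega, doubleFun_two_mul_sub hi]
  omega

theorem rcDouble_injective : Function.Injective (rcDouble (s := s)) := by
  intro τ τ' h
  refine ext_natApply fun i hi => ?_
  have := congrArg (fun σ : Perm (Fin (2 * s + 1)) => σ.natApply i) h
  simpa only [natApply_rcDouble (show i < 2 * s + 1 by omega), doubleFun_of_le hi.le] using this

theorem val_rcDouble_apply (i : Fin (2 * s + 1)) : (τ.rcDouble i : ℕ) = τ.doubleFun i := rfl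

theorem _root_.Avoids321.rcDouble (h : Avoids321 τ) : Avoids321 τ.rcDouble := by
  rintro ⟨i, j, k, hij, hjk, hkj, hji⟩
  rw [Fin.lt_def] at hij hjk
  rw [Fin.lt_def, val_rcDouble_apply, val_rcDouble_apply] at hkj hji
  have hτ := avoids321_iff.mp h
  rcases le_or_gt (k : ℕ) s with hk | hk
  · rw [doubleFun_of_le hk, doubleFun_of_le (by omega)] at hkj
    rw [doubleFun_of_le (by omega), doubleFun_of_le (by omega)] at hji
    exact hτ i j k hij hjk ⟨hkj, hji⟩
  rcases le_or_gt (i : ℕ) s with hi | hi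
  · have := doubleFun_le (τ := τ) hi
    have := lt_doubleFun (τ := τ) hk k.2
    omega
  have bi := natApply_lt_iff (σ := τ) |>.mpr (show 2 * s - i < s by omega)
  have bj := natApply_lt_iff (σ := τ) |>.mpr (show 2 * s - j < s by omega)
  have bk := natApply_lt_iff (σ := τ) |>.mpr (show 2 * s - k < s by omega)
  rw [doubleFun_of_lt hk, doubleFun_of_lt (show s < (j : ℕ) by omega)] at hkj
  rw [doubleFun_of_lt hi, doubleFun_of_lt (show s < (j : ℕ) by omega)] at hji
  exact hτ (2 * s - k) (2 * s - j) (2 * s - i) (by omega) (by omega) ⟨by omega, by omega⟩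

theorem _root_.Avoids321.of_rcDouble (h : Avoids321 τ.rcDouble) : Avoids321 τ := by
  rintro ⟨i, j, k, hij, hjk, hkj, hji⟩
  have hi := i.2
  have hj := j.2
  have hk := k.2
  refine avoids321_iff.mp h i j k hij hjk ⟨?_, ?_⟩ <;>
    rwa [natApply_rcDouble (by omega), natApply_rcDouble (by omega), doubleFun_of_le (by omega),
      doubleFun_of_le (by omega), natApply_fin, natApply_fin]

theorem natDes_rcDouble :
    τ.rcDouble.natDes = τ.natDes ∪ τ.natDes.image (2 * s - 1 - ·) := by
  ext d
  simp only [mem_union, mem_image, mem_natDes]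
  constructor
  · rintro ⟨hd, hlt⟩
    rw [natApply_rcDouble hd, natApply_rcDouble (by omega)] at hlt
    rcases lt_trichotomy d s with hds | rfl | hds
    · rw [doubleFun_of_le (show d + 1 ≤ s from hds), doubleFun_of_le hds.le] at hlt
      refine .inl ⟨?_, hlt⟩
      by_contra hs
      have := natApply_lt_iff (σ := τ) |>.mpr hds
      rw [show d + 1 = s by omega, natApply_of_le le_rfl] at hlt
      omega
    · have := lt_doubleFun (τ := τ) (show d < d + 1 by omega) hd
      rw [doubleFun_of_le le_rfl, natApply_of_le le_rfl] at hlt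
      omega
    · have b1 := natApply_lt_iff (σ := τ) |>.mpr (show 2 * s - d < s by omega)
      have b2 := natApply_lt_iff (σ := τ) |>.mpr (show 2 * s - (d + 1) < s by omega)
      rw [doubleFun_of_lt (by omega), doubleFun_of_lt hds] at hlt
      refine .inr ⟨2 * s - 1 - d, ⟨by omega, ?_⟩, by omega⟩
      rw [show 2 * s - 1 - d + 1 = 2 * s - d by omega,
        show 2 * s - 1 - d = 2 * s - (d + 1) by omega]
      omega
  · rintro (⟨hd, hlt⟩ | ⟨e, ⟨he, hlt⟩, rfl⟩)
    · refine ⟨by omega, ?_⟩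
      rwa [natApply_rcDouble (by omega), natApply_rcDouble (by omega), doubleFun_of_le (by omega),
        doubleFun_of_le (by omega)]
    · have b1 := natApply_lt_iff (σ := τ) |>.mpr (show e < s by omega)
      have b2 := natApply_lt_iff (σ := τ) |>.mpr he
      refine ⟨by omega, ?_⟩
      rw [natApply_rcDouble (by omega), natApply_rcDouble (by omega), doubleFun_of_lt (by omega),
        doubleFun_of_lt (by omega), show 2 * s - (2 * s - 1 - e + 1) = e by omega,
        show 2 * s - (2 * s - 1 - e) = e + 1 by omega]
      omega

theorem desPerm_rcDouble : desPerm τ.rcDouble = 2 * desPerm τ := by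
  have hdisj : _root_.Disjoint τ.natDes (τ.natDes.image (2 * s - 1 - ·)) := by
    simp only [disjoint_left, mem_image, not_exists, not_and]
    intro d hd e he hed
    have := (mem_natDes.mp hd).1
    have := (mem_natDes.mp he).1
    omega
  have hinj : Set.InjOn (2 * s - 1 - ·) τ.natDes := by
    intro d hd e he hde
    have := (mem_natDes.mp hd).1
    have := (mem_natDes.mp he).1
    simp only at hde
    omega
  rw [desPerm_eq_card_natDes, desPerm_eq_card_natDes, natDes_rcDouble,
    card_union_of_disjoint hdisj, card_image_of_injOn hinj, two_mul]

theorem exists_rcDouble_eq {σ : Perm (Fin (2 * s + 1))} (hσ : Avoids321 σ)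
    (hrc : σ.revCompl = σ) : ∃ τ : Perm (Fin s), τ.rcDouble = σ := by
  have hsymm : ∀ a < 2 * s + 1, σ.natApply (2 * s - a) = 2 * s - σ.natApply a := by
    intro a ha
    have h := natApply_revCompl (σ := σ) ha
    rw [hrc, show 2 * s + 1 - 1 - a = 2 * s - a by omega] at h
    have := natApply_lt_iff (σ := σ) |>.mpr (show 2 * s - a < 2 * s + 1 by omega)
    omega
  have hmid : σ.natApply s = s := by
    have := hsymm s (by omega)
    rw [show 2 * s - s = s by omega] at this
    omega
  -- a value above `s` in the first half would form a `321` with the middle point and its mirror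
  have hlow : ∀ a < s, σ.natApply a < s := by
    intro a ha
    by_contra hge
    have hne : σ.natApply a ≠ s := fun h => ha.ne (natApply_injective (h.trans hmid.symm))
    have := hsymm a (by omega)
    exact avoids321_iff.mp hσ a s (2 * s - a) ha (by omega) (by omega)
  refine ⟨ofNatFun s σ.natApply hlow natApply_injective.injOn, ext_natApply fun i hi => ?_⟩
  rw [natApply_rcDouble hi]
  rcases lt_trichotomy i s with his | rfl | his
  · rw [doubleFun_of_le his.le, natApply_ofNatFun his]
  · rw [doubleFun_of_le le_rfl, natApply_of_le le_rfl, hmid]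
  · rw [doubleFun_of_lt his, natApply_ofNatFun (by omega), hsymm i hi]
    have := natApply_lt_iff (σ := σ) |>.mpr hi
    omega

end Double

end Equiv.Perm

open Equiv Perm

theorem avoids321_one (n : ℕ) : Avoids321 (1 : Perm (Fin n)) := by
  rintro ⟨i, j, k, -, hjk, hkj, -⟩
  exact hjk.not_gt hkj

theorem card_filter_desPerm_eq_zero (n : ℕ) :
    ((Av n).filter (fun σ => desPerm σ = 0)).card = 1 := by
  rw [card_eq_one]
  refine ⟨1, ext fun σ => ?_⟩
  simp only [mem_filter, mem_singleton, Av, mem_univ, true_and]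
  constructor
  · exact fun h => eq_one_of_desPerm_eq_zero h.2
  · rintro rfl
    exact ⟨avoids321_one n, desPerm_one⟩

theorem card_filter_revCompl_fixed (s k : ℕ) :
    ((Av (2 * s + 1)).filter (fun σ => desPerm σ = k ∧ σ.revCompl = σ)).card =
      ((Av s).filter (fun τ => 2 * desPerm τ = k)).card := by
  symm
  refine card_bij (fun τ _ => τ.rcDouble) (fun τ hτ => ?_)
    (fun τ _ τ' _ h => rcDouble_injective h) (fun σ hσ => ?_)
  · simp only [Av, mem_filter, mem_univ, true_and] at hτ ⊢
    exact ⟨hτ.1.rcDouble, by rw [desPerm_rcDouble, hτ.2], revCompl_rcDouble⟩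
  · simp only [Av, mem_filter, mem_univ, true_and] at hσ ⊢
    obtain ⟨τ, rfl⟩ := exists_rcDouble_eq hσ.1 hσ.2.2
    exact ⟨τ, ⟨hσ.1.of_rcDouble, by rw [← desPerm_rcDouble, hσ.2.1]⟩, rfl⟩

theorem even_card_filter_desPerm_two_mul_add_one {s : ℕ}
    (ih : ∀ k, 1 ≤ k → Even ((Av s).filter (fun τ => desPerm τ = k)).card)
    (k : ℕ) (hk : 1 ≤ k) : Even ((Av (2 * s + 1)).filter (fun σ => desPerm σ = k)).card := by
  rw [even_card_iff_even_card_fixed revCompl, filter_filter, card_filter_revCompl_fixed]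
  · rcases Nat.even_or_odd k with ⟨j, rfl⟩ | hodd
    · simpa only [← two_mul, Nat.mul_left_cancel_iff two_pos] using ih j (by omega)
    · rw [filter_eq_empty_iff.mpr fun τ _ h =>
        Nat.not_even_iff_odd.mpr hodd ⟨desPerm τ, by omega⟩]
      exact Even.zero
  · intro σ hσ
    simp only [Av, mem_filter, mem_univ, true_and] at hσ ⊢
    exact ⟨hσ.1.revCompl, desPerm_revCompl.trans hσ.2⟩
  · exact fun σ _ => revCompl_revCompl

/-- if `n = 2^m - 1` then the number of 321-avoiding permutations of `[n]`
with 0 descents is 1, and for each `k ≥ 1` the number with exactly `k` descents is even. -/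
theorem stmt13 (m n : ℕ) (hn : n = 2 ^ m - 1) :
    ((Av n).filter (fun σ => desPerm σ = 0)).card = 1 ∧
      ∀ k, 1 ≤ k → Even (((Av n).filter (fun σ => desPerm σ = k)).card) := by
  subst hn
  refine ⟨card_filter_desPerm_eq_zero _, ?_⟩
  induction m with
  | zero =>
    intro k hk
    rw [filter_eq_empty_iff.mpr fun σ _ h => (desPerm_le σ).not_gt (by omega)]
    exact Even.zero
  | succ m ih =>
    have hpow : 2 ^ (m + 1) - 1 = 2 * (2 ^ m - 1) + 1 := by
      have := Nat.one_le_two_pow (n := m)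
      rw [pow_succ]
      omega
    rw [hpow]
    exact even_card_filter_desPerm_two_mul_add_one ih
end

section
/- Let σ ∈ Av_n(321). Then for every i ∈ [n], position i is a left-right maximum of σ if and only if σ(i) ≥ i. Consequently, lrm σ = exc σ + fix σ. -/
open Finset MvPolynomial

/-- for σ ∈ Av_n(321), position `i` is a left-right maximum iff `σ(i) ≥ i`;
consequently `lrm σ = exc σ + fix σ`. -/
theorem stmt14 {n : ℕ} (σ : Equiv.Perm (Fin n)) (hσ : σ ∈ Av n) :
    (∀ i : Fin n, IsLRMax σ i ↔ i ≤ σ i) ∧ lrm σ = excPerm σ + fixPerm σ := by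
  have hav : Avoids321 σ := by
    simpa [Av, Finset.mem_filter] using hσ
  have main : ∀ i : Fin n, IsLRMax σ i ↔ i ≤ σ i := by
    intro i
    constructor
    · intro h
      by_contra hlt
      push_neg at hlt
      have hsub : (Finset.Iic i).image σ ⊆ Finset.Iic (σ i) := by
        intro v hv
        simp only [Finset.mem_image, Finset.mem_Iic] at hv ⊢
        obtain ⟨j, hj, rfl⟩ := hv
        exact h j hj
      have hcard := Finset.card_le_card hsub
      rw [Finset.card_image_of_injective _ σ.injective] at hcard
      simp only [Fin.card_Iic] at hcard
      have : (σ i).val < i.val := hlt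
      omega
    · intro hle j hj
      by_contra hgt
      push_neg at hgt
      have hji : j < i := lt_of_le_of_ne hj (by rintro rfl; exact absurd le_rfl (not_le_of_gt hgt))
      have hcard : ((Finset.Iic i).image σ).card = (Finset.Iic i).card :=
        Finset.card_image_of_injective _ σ.injective
      have hnotsub : ¬ (Finset.Iic i).image σ ⊆ Finset.Iic i := by
        intro hs
        have heq : (Finset.Iic i).image σ = Finset.Iic i :=
          Finset.eq_of_subset_of_card_le hs hcard.ge
        have hmem : σ j ∈ Finset.Iic i :=
          heq ▸ Finset.mem_image_of_mem σ (Finset.mem_Iic.2 hj)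
        have hle2 : σ j ≤ i := Finset.mem_Iic.1 hmem
        exact absurd (lt_of_le_of_lt hle hgt) (not_lt.2 hle2)
      have hex : ∃ v ∈ Finset.Iic i, v ∉ (Finset.Iic i).image σ := by
        by_contra hc
        push_neg at hc
        have heq : Finset.Iic i = (Finset.Iic i).image σ :=
          Finset.eq_of_subset_of_card_le (fun v hv => hc v hv) hcard.le
        exact hnotsub heq.ge
      obtain ⟨v, hv1, hv2⟩ := hex
      set k := σ.symm v with hk
      have hσk : σ k = v := σ.apply_symm_apply v
      have hik : i < k := by
        by_contra hik
        push_neg at hik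
        exact hv2 (hσk ▸ Finset.mem_image_of_mem σ (Finset.mem_Iic.2 hik))
      have hvne : v ≠ σ i := by
        rintro rfl
        exact hv2 (Finset.mem_image_of_mem σ (Finset.mem_Iic.2 le_rfl))
      have hvlt : σ k < σ i := by
        rw [hσk]
        exact lt_of_le_of_ne (le_trans (Finset.mem_Iic.1 hv1) hle) hvne
      exact hav ⟨j, i, k, hji, hik, hvlt, hgt⟩
  refine ⟨main, ?_⟩
  have h1 : lrm σ = (univ.filter (fun i : Fin n => i ≤ σ i)).card := by
    unfold lrm
    congr 1
    apply Finset.filter_congr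
    intro i _
    simp [main i]
  have hdisj : Disjoint (univ.filter (fun i : Fin n => i < σ i))
      (univ.filter (fun i : Fin n => σ i = i)) := by
    rw [Finset.disjoint_filter]
    intro i _ h1 h2
    exact absurd h2.le (not_le_of_gt h1)
  rw [h1, excPerm, fixPerm, ← Finset.card_union_of_disjoint hdisj, ← Finset.filter_or]
  congr 1
  apply Finset.filter_congr
  intro i _
  simp only [le_iff_lt_or_eq, eq_comm, eq_iff_iff]
end

section
/- For every integer n ≥ 1, I_n(q,t) = t·I_{n-1}(q,t) + Σ_{k=0}^{n-2} I_k(q,t)·I_{n-1-k}(q,qt), as an identity in ℤ[q,t], where I_m(q,qt) denotes the polynomial I_m(q,t) with t replaced by qt. -/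
open Finset MvPolynomial

/-!
Every permutation is uniquely a direct sum `ρ ⊕ π` with `ρ` indecomposable (no proper initial
block); `ρ ⊕ π` avoids 321 iff both summands do, and `inv` and `lrm` are additive. Hence
`I_n = Σ_{c=1}^n J_c · I_{n-c}`, where `J_c` counts the indecomposable 321-avoiders of size `c`,
and `J_1 = t`.

For `m ≥ 1`, `expand` maps `Av_m(321)` bijectively onto the indecomposable elements of
`Av_{m+1}(321)`: it adds one to every value, keeps the left-right maxima in place, and moves the
other entries, preceded by a new entry `0`, one step to the right along the sequence of
non-maximal positions followed by the new last position. Since a 321-avoider has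
`inv σ = Σ_{i lrm} (σ i - i)`, every left-right maximum gains one inversion, so
`J_{m+1}(q,t) = I_m(q,qt)`.
-/

namespace Av321

open Equiv

section LeftRightMaxima

variable {n : ℕ}

lemma mem_Av {σ : Perm (Fin n)} : σ ∈ Av n ↔ Avoids321 σ := by
  simp [Av]

lemma card_filter_lt (x : Fin n) : #(univ.filter fun j : Fin n => j < x) = x := by
  rw [filter_gt_eq_Iio, Fin.card_Iio]

lemma card_filter_apply_lt (σ : Perm (Fin n)) (x : Fin n) :
    #(univ.filter fun j => σ j < x) = x := by
  rw [← card_filter_lt x]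
  exact card_equiv σ (by simp)

lemma le_apply_of_forall_apply_le {σ : Perm (Fin n)} {i k : Fin n}
    (h : ∀ y ≤ i, σ y ≤ σ k) : i ≤ σ k := by
  have := card_le_card_of_injOn σ (s := Iic i) (t := Iic (σ k))
    (fun y hy => mem_Iic.2 (h y (mem_Iic.1 hy))) σ.injective.injOn
  rw [Fin.card_Iic, Fin.card_Iic] at this
  exact Fin.le_def.2 (by omega)

lemma le_apply_of_isLRMax {σ : Perm (Fin n)} {i : Fin n} (h : IsLRMax σ i) : i ≤ σ i :=
  le_apply_of_forall_apply_le h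

lemma exists_isLRMax_forall_le (σ : Perm (Fin n)) (i : Fin n) :
    ∃ k ≤ i, IsLRMax σ k ∧ ∀ y ≤ i, σ y ≤ σ k := by
  obtain ⟨k, hk, hmax⟩ := exists_max_image (Iic i) σ nonempty_Iic
  rw [mem_Iic] at hk
  exact ⟨k, hk, fun y hy => hmax y (mem_Iic.2 (hy.trans hk)), fun y hy => hmax y (mem_Iic.2 hy)⟩

lemma exists_lt_apply_of_not_isLRMax {σ : Perm (Fin n)} {i : Fin n} (h : ¬ IsLRMax σ i) :
    ∃ k < i, σ i < σ k := by
  simp only [IsLRMax, not_forall, not_le, exists_prop] at h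
  obtain ⟨k, hki, hk⟩ := h
  exact ⟨k, lt_of_le_of_ne hki (by rintro rfl; exact lt_irrefl _ hk), hk⟩

lemma exists_isLRMax_apply_lt {σ : Perm (Fin n)} {i j : Fin n} (h : ¬ IsLRMax σ i)
    (hij : i ≤ j) : ∃ k ≤ j, IsLRMax σ k ∧ σ i < σ k ∧ ∀ y ≤ j, σ y ≤ σ k := by
  obtain ⟨k, hkj, hk, hmax⟩ := exists_isLRMax_forall_le σ j
  obtain ⟨l, hli, hl⟩ := exists_lt_apply_of_not_isLRMax h
  exact ⟨k, hkj, hk, hl.trans_le (hmax l (hli.le.trans hij)), hmax⟩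

lemma apply_lt_of_not_isLRMax {σ : Perm (Fin n)} (hA : Avoids321 σ) {i j : Fin n}
    (hij : i < j) (hi : ¬ IsLRMax σ i) : σ i < σ j := by
  obtain ⟨k, hki, hk⟩ := exists_lt_apply_of_not_isLRMax hi
  refine lt_of_not_ge fun hji => hA ⟨k, i, j, hki, hij, ?_, hk⟩
  exact lt_of_le_of_ne hji fun h => hij.ne (σ.injective h).symm

lemma avoids321_iff {σ : Perm (Fin n)} :
    Avoids321 σ ↔ ∀ i j, i < j → ¬ IsLRMax σ i → ¬ IsLRMax σ j → σ i < σ j := by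
  refine ⟨fun hA i j hij hi _ => apply_lt_of_not_isLRMax hA hij hi, fun H => ?_⟩
  rintro ⟨i, j, k, hij, hjk, hkj, hji⟩
  have hj : ¬ IsLRMax σ j := fun h => (h i hij.le).not_gt hji
  have hk : ¬ IsLRMax σ k := fun h => (h j hjk.le).not_gt hkj
  exact (H j k hjk hj hk).not_gt hkj

lemma lrm_eq_sum (σ : Perm (Fin n)) : lrm σ = ∑ i, if IsLRMax σ i then 1 else 0 :=
  card_filter _ _

lemma invPerm_eq_sum_card (σ : Perm (Fin n)) :
    invPerm σ = ∑ i, #(univ.filter fun j => i < j ∧ σ j < σ i) := by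
  simp only [invPerm, card_filter, Fintype.sum_prod_type]

lemma card_inversions_of_isLRMax {σ : Perm (Fin n)} {i : Fin n} (h : IsLRMax σ i) :
    #(univ.filter fun j => i < j ∧ σ j < σ i) = (σ i : ℕ) - i := by
  have hsub : univ.filter (fun j => j < i) ⊆ univ.filter (fun j => σ j < σ i) := by
    intro j hj
    simp only [mem_filter, mem_univ, true_and] at hj ⊢
    exact lt_of_le_of_ne (h j hj.le) fun e => hj.ne (σ.injective e)
  rw [← card_filter_apply_lt σ (σ i), ← card_filter_lt i, ← card_sdiff_of_subset hsub]
  congr 1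
  ext j
  simp only [mem_filter, mem_sdiff, mem_univ, true_and, not_lt]
  exact ⟨fun ⟨hij, hj⟩ => ⟨hj, hij.le⟩,
    fun ⟨hj, hij⟩ => ⟨lt_of_le_of_ne hij (by rintro rfl; exact lt_irrefl _ hj), hj⟩⟩

lemma invPerm_eq_sum {σ : Perm (Fin n)} (hA : Avoids321 σ) :
    invPerm σ = ∑ i, if IsLRMax σ i then (σ i : ℕ) - i else 0 := by
  rw [invPerm_eq_sum_card]
  refine sum_congr rfl fun i _ => ?_
  split_ifs with h
  · exact card_inversions_of_isLRMax h
  · refine card_eq_zero.2 (filter_eq_empty_iff.2 fun j _ hj => ?_)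
    exact (apply_lt_of_not_isLRMax hA hj.1 h).not_gt hj.2

end LeftRightMaxima

section DirectSum

variable {n a b : ℕ}

def SplitsAt (σ : Perm (Fin n)) (j : ℕ) : Prop :=
  ∀ i : Fin n, (i : ℕ) < j → (σ i : ℕ) < j

instance (σ : Perm (Fin n)) (j : ℕ) : Decidable (SplitsAt σ j) := by
  unfold SplitsAt; infer_instance

lemma exists_pos_splitsAt (σ : Perm (Fin n)) : ∃ j, 0 < j ∧ SplitsAt σ j :=
  ⟨n + 1, n.succ_pos, fun i _ => (σ i).isLt.trans n.lt_succ_self⟩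

/-- `σ` is indecomposable iff `firstSplit σ = n`. -/
def firstSplit (σ : Perm (Fin n)) : ℕ := Nat.find (exists_pos_splitsAt σ)

lemma firstSplit_pos (σ : Perm (Fin n)) : 0 < firstSplit σ :=
  (Nat.find_spec (exists_pos_splitsAt σ)).1

lemma splitsAt_firstSplit (σ : Perm (Fin n)) : SplitsAt σ (firstSplit σ) :=
  (Nat.find_spec (exists_pos_splitsAt σ)).2

lemma firstSplit_le {σ : Perm (Fin n)} {j : ℕ} (hj : 0 < j) (h : SplitsAt σ j) :
    firstSplit σ ≤ j :=
  Nat.find_min' _ ⟨hj, h⟩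

lemma firstSplit_le_self (σ : Perm (Fin n)) (hn : 0 < n) : firstSplit σ ≤ n :=
  firstSplit_le hn fun i _ => (σ i).isLt

lemma not_splitsAt_of_lt_firstSplit {σ : Perm (Fin n)} {j : ℕ} (hj : 0 < j)
    (h : j < firstSplit σ) : ¬ SplitsAt σ j :=
  fun hs => (firstSplit_le hj hs).not_gt h

lemma firstSplit_eq_iff {σ : Perm (Fin n)} {c : ℕ} (hc : 0 < c) :
    firstSplit σ = c ↔ SplitsAt σ c ∧ ∀ j, 0 < j → j < c → ¬ SplitsAt σ j := by
  rw [firstSplit, Nat.find_eq_iff]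
  exact ⟨fun ⟨⟨_, h⟩, hmin⟩ => ⟨h, fun j hj hjc hs => hmin j hjc ⟨hj, hs⟩⟩,
    fun ⟨h, hmin⟩ => ⟨⟨hc, h⟩, fun j hjc ⟨hj, hs⟩ => hmin j hj hjc hs⟩⟩

def directSum (ρ : Perm (Fin a)) (π : Perm (Fin b)) : Perm (Fin (a + b)) :=
  finSumFinEquiv.permCongr (ρ.sumCongr π)

variable {ρ : Perm (Fin a)} {π : Perm (Fin b)}

@[simp]
lemma directSum_castAdd (i : Fin a) : directSum ρ π (Fin.castAdd b i) = Fin.castAdd b (ρ i) := by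
  simp [directSum, Equiv.permCongr_apply]

@[simp]
lemma directSum_natAdd (i : Fin b) : directSum ρ π (Fin.natAdd a i) = Fin.natAdd a (π i) := by
  simp [directSum, Equiv.permCongr_apply]

lemma directSum_injective {ρ' : Perm (Fin a)} {π' : Perm (Fin b)}
    (h : directSum ρ π = directSum ρ' π') :
    ρ = ρ' ∧ π = π' := by
  have h' : ρ.sumCongr π = ρ'.sumCongr π' := finSumFinEquiv.permCongr.injective h
  simpa using @Perm.sumCongrHom_injective _ _ (ρ, π) (ρ', π') h'

lemma exists_directSum_eq {σ : Perm (Fin (a + b))} (h : SplitsAt σ a) :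
    ∃ (ρ : Perm (Fin a)) (π : Perm (Fin b)), directSum ρ π = σ := by
  have hmaps : Set.MapsTo (finSumFinEquiv.symm.permCongr σ) (Set.range Sum.inl)
      (Set.range Sum.inl) := by
    rintro _ ⟨i, rfl⟩
    obtain ⟨v, e⟩ : ∃ v : Fin a, σ (Fin.castAdd b i) = Fin.castAdd b v :=
      ⟨⟨_, h (Fin.castAdd b i) (by simp)⟩, Fin.ext rfl⟩
    exact ⟨v, by simp [Equiv.permCongr_apply, e]⟩
  obtain ⟨⟨ρ, π⟩, hσ⟩ := Perm.mem_sumCongrHom_range_of_perm_mapsTo_inl hmaps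
  refine ⟨ρ, π, ?_⟩
  simp only [Perm.sumCongrHom_apply] at hσ
  rw [directSum, hσ, ← Equiv.permCongr_symm, Equiv.apply_symm_apply]

lemma isLRMax_directSum_castAdd (i : Fin a) :
    IsLRMax (directSum ρ π) (Fin.castAdd b i) ↔ IsLRMax ρ i := by
  simp only [IsLRMax, Fin.forall_fin_add, directSum_castAdd, directSum_natAdd, Fin.le_def,
    Fin.val_castAdd, Fin.val_natAdd]
  have := i.isLt
  exact ⟨fun h => h.1, fun h => ⟨h, fun j hj => by omega⟩⟩

lemma isLRMax_directSum_natAdd (i : Fin b) :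
    IsLRMax (directSum ρ π) (Fin.natAdd a i) ↔ IsLRMax π i := by
  simp only [IsLRMax, Fin.forall_fin_add, directSum_castAdd, directSum_natAdd, Fin.le_def,
    Fin.val_castAdd, Fin.val_natAdd, add_le_add_iff_left]
  exact ⟨fun h => h.2, fun h => ⟨fun j _ => by have := (ρ j).isLt; omega, h⟩⟩

lemma lrm_directSum (ρ : Perm (Fin a)) (π : Perm (Fin b)) :
    lrm (directSum ρ π) = lrm ρ + lrm π := by
  simp only [lrm_eq_sum, Fin.sum_univ_add, isLRMax_directSum_castAdd, isLRMax_directSum_natAdd]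

lemma avoids321_directSum_iff : Avoids321 (directSum ρ π) ↔ Avoids321 ρ ∧ Avoids321 π := by
  simp only [avoids321_iff, Fin.forall_fin_add, isLRMax_directSum_castAdd, isLRMax_directSum_natAdd,
    directSum_castAdd, directSum_natAdd, Fin.lt_def, Fin.val_castAdd, Fin.val_natAdd,
    add_lt_add_iff_left]
  constructor
  · exact fun h => ⟨fun i => (h.1 i).1, fun j => (h.2 j).2⟩
  · refine fun ⟨hρ, hπ⟩ => ⟨fun i => ⟨hρ i, fun j _ _ _ => ?_⟩,
      fun j => ⟨fun i hji => absurd hji ?_, hπ j⟩⟩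
    · have := (ρ i).isLt; omega
    · have := i.isLt; omega

lemma invPerm_directSum (hρ : Avoids321 ρ) (hπ : Avoids321 π) :
    invPerm (directSum ρ π) = invPerm ρ + invPerm π := by
  rw [invPerm_eq_sum (avoids321_directSum_iff.2 ⟨hρ, hπ⟩), invPerm_eq_sum hρ,
    invPerm_eq_sum hπ, Fin.sum_univ_add]
  simp only [isLRMax_directSum_castAdd, isLRMax_directSum_natAdd, directSum_castAdd,
    directSum_natAdd, Fin.val_castAdd, Fin.val_natAdd, Nat.add_sub_add_left]

lemma splitsAt_directSum_iff {j : ℕ} (hj : j ≤ a) :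
    SplitsAt (directSum ρ π) j ↔ SplitsAt ρ j := by
  simp only [SplitsAt, Fin.forall_fin_add, directSum_castAdd, directSum_natAdd, Fin.val_castAdd,
    Fin.val_natAdd]
  exact ⟨fun h => h.1, fun h => ⟨h, fun i hi => by omega⟩⟩

lemma firstSplit_directSum (ρ : Perm (Fin a)) (π : Perm (Fin b)) (ha : 0 < a) :
    firstSplit (directSum ρ π) = firstSplit ρ := by
  have hle := firstSplit_le_self ρ ha
  rw [firstSplit_eq_iff (firstSplit_pos ρ), splitsAt_directSum_iff hle]
  refine ⟨splitsAt_firstSplit ρ, fun j hj hjc => ?_⟩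
  rw [splitsAt_directSum_iff (hjc.le.trans hle)]
  exact not_splitsAt_of_lt_firstSplit hj hjc

end DirectSum

section Slots

variable {m : ℕ} (s : Finset (Fin m))

def gaps : Finset (Fin (m + 1)) := (s.map Fin.castSuccEmb)ᶜ

variable {s}

lemma castSucc_mem_gaps {j : Fin m} : j.castSucc ∈ gaps s ↔ j ∉ s := by
  simp [gaps]

lemma last_mem_gaps : Fin.last m ∈ gaps s := by
  simp [gaps, Fin.castSucc_ne_last]

variable (s)

def gapFrom (x : Fin (m + 1)) : Fin (m + 1) :=
  ((gaps s).filter (x ≤ ·)).min'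
    ⟨Fin.last m, mem_filter.2 ⟨last_mem_gaps, Fin.le_last x⟩⟩

variable {s}

lemma gapFrom_mem_gaps (x : Fin (m + 1)) : gapFrom s x ∈ gaps s :=
  (mem_filter.1 (min'_mem _ _)).1

lemma le_gapFrom (x : Fin (m + 1)) : x ≤ gapFrom s x :=
  (mem_filter.1 (min'_mem _ _)).2

lemma gapFrom_le {x y : Fin (m + 1)} (hy : y ∈ gaps s) (hxy : x ≤ y) : gapFrom s x ≤ y :=
  min'_le _ _ (mem_filter.2 ⟨hy, hxy⟩)

lemma gapFrom_mono {x y : Fin (m + 1)} (hxy : x ≤ y) : gapFrom s x ≤ gapFrom s y :=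
  gapFrom_le (gapFrom_mem_gaps y) (hxy.trans (le_gapFrom y))

lemma notMem_gaps_of_lt_gapFrom {x y : Fin (m + 1)} (hxy : x ≤ y) (hy : y < gapFrom s x) :
    y ∉ gaps s :=
  fun h => (gapFrom_le h hxy).not_gt hy

lemma gapFrom_lt_gapFrom_succ {x : Fin (m + 1)} {q : Fin m} (hq : q ∉ s) (hx : x ≤ q.castSucc) :
    gapFrom s x < gapFrom s q.succ :=
  (gapFrom_le (castSucc_mem_gaps.2 hq) hx).trans_lt
    (Fin.castSucc_lt_succ.trans_le (le_gapFrom _))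

variable (s)

/-- Entries at positions in `s` keep their place; every other entry, and a new entry `none`
in front, moves to the first gap after it. -/
def slot : Option (Fin m) → Fin (m + 1)
  | none => gapFrom s 0
  | some p => if p ∈ s then p.castSucc else gapFrom s p.succ

lemma slot_injective : Function.Injective (slot s) := by
  have hcast : ∀ {p : Fin m} (x), p ∈ s → gapFrom s x ≠ p.castSucc :=
    fun x hp h => castSucc_mem_gaps.1 (h ▸ gapFrom_mem_gaps x) hp
  have hsome : ∀ {p q : Fin m}, p < q → slot s (some p) ≠ slot s (some q) := by
    intro p q hpq h
    simp only [slot] at h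
    split_ifs at h with hp hq hq
    · exact hpq.ne (Fin.castSucc_injective _ h)
    · exact hcast _ hp h.symm
    · exact hcast _ hq h
    · exact (gapFrom_lt_gapFrom_succ hq (Fin.succ_le_castSucc_iff.2 hpq)).ne h
  have hnone : ∀ p : Fin m, slot s none ≠ slot s (some p) := by
    intro p h
    simp only [slot] at h
    split_ifs at h with hp
    · exact hcast _ hp h
    · exact (gapFrom_lt_gapFrom_succ hp (Fin.zero_le _)).ne h
  rintro (_ | p) (_ | q) h
  · rfl
  · exact absurd h (hnone q)
  · exact absurd h.symm (hnone p)
  · rcases lt_trichotomy p q with hpq | rfl | hpq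
    · exact absurd h (hsome hpq)
    · rfl
    · exact absurd h.symm (hsome hpq)

noncomputable def slotEquiv : Option (Fin m) ≃ Fin (m + 1) :=
  Equiv.ofBijective (slot s)
    ((Fintype.bijective_iff_injective_and_card _).2 ⟨slot_injective s, by simp⟩)

variable {s}

lemma slotEquiv_none : slotEquiv s none = gapFrom s 0 := rfl

lemma slotEquiv_some_of_mem {p : Fin m} (hp : p ∈ s) : slotEquiv s (some p) = p.castSucc :=
  if_pos hp

lemma slotEquiv_some_of_notMem {p : Fin m} (hp : p ∉ s) :
    slotEquiv s (some p) = gapFrom s p.succ :=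
  if_neg hp

lemma exists_eq_slotEquiv_of_mem_gaps {x : Fin (m + 1)} (hx : x ∈ gaps s) :
    x = gapFrom s 0 ∨ ∃ p ∉ s, x = gapFrom s p.succ := by
  obtain ⟨o, rfl⟩ := (slotEquiv s).surjective x
  rcases o with _ | p
  · exact Or.inl rfl
  · by_cases hp : p ∈ s
    · rw [slotEquiv_some_of_mem hp, castSucc_mem_gaps] at hx
      exact absurd hp hx
    · exact Or.inr ⟨p, hp, slotEquiv_some_of_notMem hp⟩

variable (s)

noncomputable def extendAt (τ : Perm (Fin m)) : Perm (Fin (m + 1)) :=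
  (slotEquiv s).symm.trans ((optionCongr τ).trans (_root_.finSuccEquiv m).symm)

variable {s} {τ : Perm (Fin m)}

lemma extendAt_castSucc {j : Fin m} (hj : j ∈ s) : extendAt s τ j.castSucc = (τ j).succ := by
  simp [extendAt, ← slotEquiv_some_of_mem hj]

lemma extendAt_gapFrom_succ {p : Fin m} (hp : p ∉ s) :
    extendAt s τ (gapFrom s p.succ) = (τ p).succ := by
  simp [extendAt, ← slotEquiv_some_of_notMem hp]

lemma extendAt_gapFrom_zero : extendAt s τ (gapFrom s 0) = 0 := by
  simp [extendAt, ← slotEquiv_none]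

lemma extendAt_of_mem_gaps {x : Fin (m + 1)} (hx : x ∈ gaps s) :
    extendAt s τ x = 0 ∨ ∃ p ∉ s, p.castSucc < x ∧ extendAt s τ x = (τ p).succ := by
  rcases exists_eq_slotEquiv_of_mem_gaps hx with rfl | ⟨p, hp, rfl⟩
  · exact Or.inl extendAt_gapFrom_zero
  · exact Or.inr ⟨p, hp, Fin.castSucc_lt_succ.trans_le (le_gapFrom _),
      extendAt_gapFrom_succ hp⟩

lemma extendAt_le {i : Fin m} {w : Fin m} {y : Fin (m + 1)} (hy : y ≤ i.castSucc)
    (hw : ∀ j ≤ i, τ j ≤ w) : extendAt s τ y ≤ w.succ := by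
  obtain ⟨j, rfl⟩ | rfl := Fin.eq_castSucc_or_eq_last y
  · rw [Fin.castSucc_le_castSucc_iff] at hy
    by_cases hj : j ∈ s
    · rw [extendAt_castSucc hj, Fin.succ_le_succ_iff]
      exact hw j hy
    · rcases extendAt_of_mem_gaps (castSucc_mem_gaps.2 hj) with h | ⟨p, -, hpj, h⟩
      · rw [h]; exact Fin.zero_le _
      · rw [h, Fin.succ_le_succ_iff]
        exact hw p ((Fin.castSucc_lt_castSucc_iff.1 hpj).le.trans hy)
  · exact absurd hy (Fin.castSucc_lt_last i).not_ge

end Slots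

section Expand

variable {n m : ℕ}

def lrmSet (σ : Perm (Fin n)) : Finset (Fin n) := univ.filter (IsLRMax σ)

lemma mem_lrmSet {σ : Perm (Fin n)} {i : Fin n} : i ∈ lrmSet σ ↔ IsLRMax σ i := by
  simp [lrmSet]

noncomputable def expand (τ : Perm (Fin m)) : Perm (Fin (m + 1)) := extendAt (lrmSet τ) τ

variable {τ : Perm (Fin m)}

lemma expand_castSucc {j : Fin m} (h : IsLRMax τ j) : expand τ j.castSucc = (τ j).succ :=
  extendAt_castSucc (mem_lrmSet.2 h)

lemma isLRMax_expand_castSucc_of_isLRMax {i : Fin m} (h : IsLRMax τ i) :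
    IsLRMax (expand τ) i.castSucc := by
  intro y hy
  rw [expand_castSucc h]
  exact extendAt_le hy h

lemma not_isLRMax_expand_of_mem_gaps {x : Fin (m + 1)} (hx : x ∈ gaps (lrmSet τ)) {i : Fin m}
    (hi : i.castSucc < x) : ¬ IsLRMax (expand τ) x := by
  intro hmax
  rcases extendAt_of_mem_gaps (τ := τ) hx with h | ⟨p, hp, hpx, h⟩
  · have hne : expand τ i.castSucc ≠ expand τ x := fun e => hi.ne ((expand τ).injective e)
    have hle := hmax _ hi.le
    rw [expand, h] at hle hne
    exact hne (Fin.le_zero_iff.1 hle)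
  · obtain ⟨k, hkp, hk, hlt, -⟩ := exists_isLRMax_apply_lt (mem_lrmSet.not.1 hp) le_rfl
    have hle := hmax k.castSucc ((Fin.castSucc_le_castSucc_iff.2 hkp).trans hpx.le)
    rw [expand_castSucc hk, expand, h, Fin.succ_le_succ_iff] at hle
    exact hle.not_gt hlt

lemma isLRMax_expand_castSucc_iff {i : Fin m} :
    IsLRMax (expand τ) i.castSucc ↔ IsLRMax τ i := by
  refine ⟨fun h => by_contra fun hi => ?_, isLRMax_expand_castSucc_of_isLRMax⟩
  obtain ⟨k, hki, -⟩ := exists_lt_apply_of_not_isLRMax hi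
  exact not_isLRMax_expand_of_mem_gaps (castSucc_mem_gaps.2 (mem_lrmSet.not.2 hi))
    (Fin.castSucc_lt_castSucc_iff.2 hki) h

lemma not_isLRMax_expand_last (hm : 0 < m) : ¬ IsLRMax (expand τ) (Fin.last m) :=
  not_isLRMax_expand_of_mem_gaps last_mem_gaps (Fin.castSucc_lt_last ⟨0, hm⟩)

lemma mem_gaps_of_not_isLRMax_expand {x : Fin (m + 1)} (hx : ¬ IsLRMax (expand τ) x) :
    x ∈ gaps (lrmSet τ) := by
  obtain ⟨j, rfl⟩ | rfl := Fin.eq_castSucc_or_eq_last x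
  · rw [isLRMax_expand_castSucc_iff] at hx
    exact castSucc_mem_gaps.2 (mem_lrmSet.not.2 hx)
  · exact last_mem_gaps

lemma avoids321_expand_iff : Avoids321 (expand τ) ↔ Avoids321 τ := by
  constructor
  · intro hA
    rw [avoids321_iff]
    intro p q hpq hp hq
    rw [← mem_lrmSet] at hp hq
    have h := apply_lt_of_not_isLRMax hA
      (gapFrom_lt_gapFrom_succ hq (Fin.succ_le_castSucc_iff.2 hpq))
      (not_isLRMax_expand_of_mem_gaps (gapFrom_mem_gaps _)
        (Fin.castSucc_lt_succ.trans_le (le_gapFrom _)))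
    rwa [expand, extendAt_gapFrom_succ hp, extendAt_gapFrom_succ hq, Fin.succ_lt_succ_iff] at h
  · intro hA
    rw [avoids321_iff]
    intro x y hxy hx hy
    replace hx := mem_gaps_of_not_isLRMax_expand hx
    rw [expand]
    rcases exists_eq_slotEquiv_of_mem_gaps (mem_gaps_of_not_isLRMax_expand hy)
      with rfl | ⟨q, hq, rfl⟩
    · exact absurd hxy (gapFrom_le hx (Fin.zero_le _)).not_gt
    rw [extendAt_gapFrom_succ hq]
    rcases exists_eq_slotEquiv_of_mem_gaps hx with rfl | ⟨p, hp, rfl⟩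
    · rw [extendAt_gapFrom_zero]
      exact Fin.succ_pos _
    · rw [extendAt_gapFrom_succ hp, Fin.succ_lt_succ_iff]
      refine apply_lt_of_not_isLRMax hA (lt_of_not_ge fun hqp => ?_) (mem_lrmSet.not.1 hp)
      exact hxy.not_ge (gapFrom_mono (Fin.succ_le_succ_iff.2 hqp))

lemma lrm_expand (hm : 0 < m) : lrm (expand τ) = lrm τ := by
  rw [lrm_eq_sum, lrm_eq_sum, Fin.sum_univ_castSucc, if_neg (not_isLRMax_expand_last hm),
    add_zero]
  simp only [isLRMax_expand_castSucc_iff]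

lemma invPerm_expand (hA : Avoids321 τ) : invPerm (expand τ) = invPerm τ + lrm τ := by
  rw [invPerm_eq_sum (avoids321_expand_iff.2 hA), invPerm_eq_sum hA, lrm_eq_sum,
    ← sum_add_distrib, Fin.sum_univ_castSucc]
  have hlast : (if IsLRMax (expand τ) (Fin.last m)
      then (expand τ (Fin.last m) : ℕ) - Fin.last m else 0) = 0 := by
    split_ifs
    · exact Nat.sub_eq_zero_of_le (Fin.le_last _)
    · rfl
  rw [hlast, add_zero]
  refine sum_congr rfl fun i _ => ?_
  by_cases h : IsLRMax τ i
  · have := le_apply_of_isLRMax h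
    simp only [isLRMax_expand_castSucc_iff, h, if_true, expand_castSucc h, Fin.val_succ,
      Fin.val_castSucc]
    rw [Fin.le_def] at this
    omega
  · simp only [isLRMax_expand_castSucc_iff, h, if_false]

lemma firstSplit_expand (τ : Perm (Fin m)) : firstSplit (expand τ) = m + 1 := by
  rw [firstSplit_eq_iff m.succ_pos]
  refine ⟨fun i _ => (expand τ i).isLt, fun j hj hjm hs => ?_⟩
  obtain ⟨k, hkj, hk, hmax⟩ := exists_isLRMax_forall_le τ ⟨j - 1, by omega⟩
  have hjk := Fin.le_def.1 (le_apply_of_forall_apply_le hmax)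
  have := hs k.castSucc (by rw [Fin.le_def] at hkj; simp only [Fin.val_castSucc] at hkj ⊢; omega)
  rw [expand_castSucc hk, Fin.val_succ] at this
  simp only at hjk
  omega

end Expand

section Contract

variable {n m : ℕ}

/-- Otherwise the entries before the first one exceeding `ρ u` would form a proper initial
block of `ρ`. -/
lemma exists_le_apply_gt_of_isLRMax_between {ρ : Perm (Fin n)} (hA : Avoids321 ρ)
    (hI : firstSplit ρ = n) {i u : Fin n} (hu : ¬ IsLRMax ρ u) (hiu : i < u)
    (hrun : ∀ x, i < x → x < u → IsLRMax ρ x) : ∃ x ≤ i, ρ u < ρ x := by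
  by_contra! hbd
  obtain ⟨k', hk'u, hk'⟩ := exists_lt_apply_of_not_isLRMax hu
  obtain ⟨k, hkC, hmin⟩ :=
    (univ.filter fun x => ρ u < ρ x).exists_min_image id ⟨k', by simp [hk']⟩
  simp only [mem_filter, mem_univ, true_and, id] at hkC hmin
  have hku : k < u := (hmin k' hk').trans_lt hk'u
  have hik : i < k := lt_of_not_ge fun hki => (hbd k hki).not_gt hkC
  have hsmall : ∀ y, ρ y < ρ u → y < k := by
    intro y hy
    by_contra! hky
    rcases lt_trichotomy y u with hyu | rfl | huy
    · exact ((hrun y (hik.trans_le hky) hyu) k hky).not_gt (hy.trans hkC)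
    · exact lt_irrefl _ hy
    · exact hA ⟨k, u, y, hku, huy, hy, hkC⟩
  have hcard : (ρ u : ℕ) ≤ k := by
    rw [← card_filter_apply_lt ρ (ρ u), ← card_filter_lt k]
    exact card_le_card fun y hy => by
      simp only [mem_filter, mem_univ, true_and] at hy ⊢
      exact hsmall y hy
  refine not_splitsAt_of_lt_firstSplit (j := k) (by rw [Fin.lt_def] at hik; omega)
    (by rw [hI]; exact k.isLt) fun q hq => ?_
  have hqu : ρ q < ρ u := lt_of_le_of_ne (not_lt.1 fun h => hq.not_ge (hmin q h))
    fun e => (Fin.lt_def.2 hq).trans hku |>.ne (ρ.injective e)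
  rw [Fin.lt_def] at hqu
  omega

variable {ρ : Perm (Fin (m + 1))}

lemma not_isLRMax_last (hI : firstSplit ρ = m + 1) (hm : 0 < m) :
    ¬ IsLRMax ρ (Fin.last m) := by
  intro h
  have hlast : ρ (Fin.last m) = Fin.last m := le_antisymm (Fin.le_last _) (le_apply_of_isLRMax h)
  refine not_splitsAt_of_lt_firstSplit (σ := ρ) (j := m) hm (by omega) fun i hi => ?_
  have hne : ρ i ≠ Fin.last m := fun e =>
    (Fin.lt_last_iff_ne_last.1 (Fin.lt_def.2 hi)) (ρ.injective (e.trans hlast.symm))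
  exact Fin.lt_last_iff_ne_last.2 hne

def lrmSetInit (ρ : Perm (Fin (m + 1))) : Finset (Fin m) :=
  univ.filter fun j => IsLRMax ρ j.castSucc

lemma mem_gaps_lrmSetInit (hlast : ¬ IsLRMax ρ (Fin.last m)) (x : Fin (m + 1)) :
    x ∈ gaps (lrmSetInit ρ) ↔ ¬ IsLRMax ρ x := by
  obtain ⟨j, rfl⟩ | rfl := Fin.eq_castSucc_or_eq_last x
  · simp [castSucc_mem_gaps, lrmSetInit]
  · simp [last_mem_gaps, hlast]

/-- The inverse of `expand` on indecomposable permutations. -/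
noncomputable def contract (ρ : Perm (Fin (m + 1))) : Perm (Fin m) :=
  removeNone ((slotEquiv (lrmSetInit ρ)).trans (ρ.trans (_root_.finSuccEquiv m)))

lemma optionCongr_removeNone {α β : Type*} {e : Option α ≃ Option β} (h : e none = none) :
    optionCongr (removeNone e) = e := by
  ext1 (_ | x)
  · exact h.symm
  · refine removeNone_some e ?_
    exact Option.ne_none_iff_exists'.1 fun hx =>
      Option.some_ne_none x (e.injective (hx.trans h.symm))

lemma apply_gapFrom_zero (hA : Avoids321 ρ) (hI : firstSplit ρ = m + 1) (hm : 0 < m) :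
    ρ (gapFrom (lrmSetInit ρ) 0) = 0 := by
  have hgaps := mem_gaps_lrmSetInit (not_isLRMax_last hI hm)
  have hz : ¬ IsLRMax ρ (ρ.symm 0) := by
    intro h
    have h0 : ρ 0 = 0 := Fin.le_zero_iff.1 ((h 0 (Fin.zero_le _)).trans_eq (ρ.apply_symm_apply 0))
    refine not_splitsAt_of_lt_firstSplit (σ := ρ) (j := 1) one_pos (by omega) fun i hi => ?_
    rw [show i = 0 from Fin.ext (by rw [Fin.val_zero]; omega), h0]
    exact one_pos
  rcases (gapFrom_le ((hgaps _).2 hz) (Fin.zero_le _)).lt_or_eq with hlt | heq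
  · have := apply_lt_of_not_isLRMax hA hlt ((hgaps _).1 (gapFrom_mem_gaps 0))
    rw [ρ.apply_symm_apply] at this
    exact absurd this (Fin.not_lt_zero _)
  · rw [heq, ρ.apply_symm_apply]

lemma extendAt_contract (hA : Avoids321 ρ) (hI : firstSplit ρ = m + 1) (hm : 0 < m) :
    extendAt (lrmSetInit ρ) (contract ρ) = ρ := by
  rw [extendAt, contract, optionCongr_removeNone (by simp [slotEquiv_none,
    apply_gapFrom_zero hA hI hm])]
  ext1 x
  simp

lemma exists_le_apply_gt_apply_gapFrom (hA : Avoids321 ρ) (hI : firstSplit ρ = m + 1)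
    (hm : 0 < m) {y : Fin m} {i : Fin (m + 1)} (hyi : y.castSucc ≤ i)
    (hi : i < gapFrom (lrmSetInit ρ) y.succ) :
    ∃ x ≤ i, ρ (gapFrom (lrmSetInit ρ) y.succ) < ρ x := by
  have hgaps := mem_gaps_lrmSetInit (not_isLRMax_last hI hm)
  refine exists_le_apply_gt_of_isLRMax_between hA hI ((hgaps _).1 (gapFrom_mem_gaps _)) hi
    fun x hix hxu => not_not.1 fun hx => ?_
  exact notMem_gaps_of_lt_gapFrom (Fin.castSucc_lt_iff_succ_le.1 (hyi.trans_lt hix)) hxu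
    ((hgaps _).2 hx)

lemma lrmSet_contract (hA : Avoids321 ρ) (hI : firstSplit ρ = m + 1) (hm : 0 < m) :
    lrmSet (contract ρ) = lrmSetInit ρ := by
  set s := lrmSetInit ρ
  have hgaps := mem_gaps_lrmSetInit (not_isLRMax_last hI hm)
  have hE := extendAt_contract hA hI hm
  have hmem {j : Fin m} (hj : j ∈ s) : ((contract ρ) j).succ = ρ j.castSucc := by
    rw [← extendAt_castSucc hj, hE]
  have hnot {j : Fin m} (hj : j ∉ s) : ((contract ρ) j).succ = ρ (gapFrom s j.succ) := by
    rw [← extendAt_gapFrom_succ hj, hE]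
  ext j
  rw [mem_lrmSet]
  constructor
  · intro hτ
    by_contra hj
    have hρj : ¬ IsLRMax ρ j.castSucc := (hgaps _).1 (castSucc_mem_gaps.2 hj)
    obtain ⟨ks, hks, hksmax, hlt, hmax⟩ := exists_isLRMax_apply_lt hρj le_rfl
    obtain ⟨k, rfl⟩ | rfl := Fin.eq_castSucc_or_eq_last ks
    · obtain ⟨x, hx, hux⟩ := exists_le_apply_gt_apply_gapFrom hA hI hm le_rfl
        (Fin.castSucc_lt_succ.trans_le (le_gapFrom _))
      have hks' : k ∈ s := by simpa [s, lrmSetInit] using hksmax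
      have := hτ k (Fin.castSucc_le_castSucc_iff.1 hks)
      rw [← Fin.succ_le_succ_iff, hmem hks', hnot hj] at this
      exact (hux.trans_le (hmax x hx)).not_ge this
    · exact absurd hks (Fin.castSucc_lt_last j).not_ge
  · intro hj y hy
    have hρj : IsLRMax ρ j.castSucc := by simpa [s, lrmSetInit] using hj
    rw [← Fin.succ_le_succ_iff, hmem hj]
    by_cases hys : y ∈ s
    · rw [hmem hys]
      exact hρj _ (Fin.castSucc_le_castSucc_iff.2 hy)
    · rw [hnot hys]
      rcases le_or_gt (gapFrom s y.succ) j.castSucc with hle | hlt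
      · exact hρj _ hle
      · obtain ⟨x, hx, hux⟩ := exists_le_apply_gt_apply_gapFrom hA hI hm
          (Fin.castSucc_le_castSucc_iff.2 hy) hlt
        exact hux.le.trans (hρj x hx)

lemma expand_contract (hA : Avoids321 ρ) (hI : firstSplit ρ = m + 1) (hm : 0 < m) :
    expand (contract ρ) = ρ := by
  rw [expand, lrmSet_contract hA hI hm, extendAt_contract hA hI hm]

lemma contract_expand (τ : Perm (Fin m)) : contract (expand τ) = τ := by
  have hs : lrmSetInit (expand τ) = lrmSet τ := by
    ext j
    simp [lrmSetInit, mem_lrmSet, isLRMax_expand_castSucc_iff]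
  rw [contract, hs, ← removeNone_optionCongr τ]
  congr 1
  ext1 o
  simp [expand, extendAt]

end Contract

section GeneratingFunction

variable {n m a b : ℕ}

noncomputable def weight (σ : Perm (Fin n)) : MvPolynomial (Fin 2) ℤ :=
  X 0 ^ invPerm σ * X 1 ^ lrm σ

lemma IPoly_eq_sum_weight (n : ℕ) : IPoly n = ∑ σ ∈ Av n, weight σ := rfl

noncomputable def indecPoly (n : ℕ) : MvPolynomial (Fin 2) ℤ :=
  ∑ ρ ∈ (Av n).filter (firstSplit · = n), weight ρ

lemma weight_directSum {ρ : Perm (Fin a)} {π : Perm (Fin b)} (hρ : Avoids321 ρ)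
    (hπ : Avoids321 π) :
    weight (directSum ρ π) = weight ρ * weight π := by
  rw [weight, weight, weight, invPerm_directSum hρ hπ, lrm_directSum]
  ring

lemma sum_weight_firstSplit_eq (ha : 0 < a) :
    ∑ σ ∈ (Av (a + b)).filter (firstSplit · = a), weight σ = indecPoly a * IPoly b := by
  rw [indecPoly, IPoly_eq_sum_weight, sum_mul_sum, ← sum_product']
  symm
  refine sum_nbij (fun p => directSum p.1 p.2) ?_ ?_ ?_ ?_
  · rintro ⟨ρ, π⟩ hp
    simp only [mem_product, mem_filter, mem_Av] at hp ⊢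
    exact ⟨avoids321_directSum_iff.2 ⟨hp.1.1, hp.2⟩,
      (firstSplit_directSum ρ π ha).trans hp.1.2⟩
  · rintro ⟨ρ, π⟩ - ⟨ρ', π'⟩ - h
    obtain ⟨rfl, rfl⟩ := directSum_injective h
    rfl
  · intro σ hσ
    rw [mem_coe, mem_filter, mem_Av] at hσ
    obtain ⟨ρ, π, rfl⟩ := exists_directSum_eq (hσ.2 ▸ splitsAt_firstSplit σ)
    obtain ⟨hρ, hπ⟩ := avoids321_directSum_iff.1 hσ.1
    refine ⟨(ρ, π), mem_coe.2 (mem_product.2 ⟨mem_filter.2 ⟨mem_Av.2 hρ, ?_⟩, mem_Av.2 hπ⟩),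
      rfl⟩
    exact (firstSplit_directSum ρ π ha).symm.trans hσ.2
  · rintro ⟨ρ, π⟩ hp
    simp only [mem_product, mem_filter, mem_Av] at hp
    exact (weight_directSum hp.1.1 hp.2).symm

lemma IPoly_eq_sum_indecPoly (hn : 0 < n) :
    IPoly n = ∑ c ∈ Icc 1 n, indecPoly c * IPoly (n - c) := by
  rw [IPoly_eq_sum_weight, ← sum_fiberwise_of_maps_to (t := Icc 1 n) (g := firstSplit)
    fun σ _ => mem_Icc.2 ⟨firstSplit_pos σ, firstSplit_le_self σ hn⟩]
  refine sum_congr rfl fun c hc => ?_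
  obtain ⟨b, rfl⟩ : ∃ b, n = c + b := ⟨n - c, by rw [mem_Icc] at hc; omega⟩
  rw [Nat.add_sub_cancel_left, ← sum_weight_firstSplit_eq (mem_Icc.1 hc).1]

lemma indecPoly_one : indecPoly 1 = X 1 := by
  have hAv : (Av 1).filter (firstSplit · = 1) = {1} :=
    eq_singleton_iff_unique_mem.2 ⟨mem_filter.2 ⟨mem_Av.2 fun ⟨i, j, _, hij, _⟩ =>
      hij.ne (Subsingleton.elim i j), le_antisymm (firstSplit_le_self 1 one_pos)
        (firstSplit_pos 1)⟩, fun σ _ => Subsingleton.elim σ 1⟩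
  have hinv : invPerm (1 : Perm (Fin 1)) = 0 := by decide
  have hlrm : lrm (1 : Perm (Fin 1)) = 1 := by decide
  rw [indecPoly, hAv, sum_singleton, weight, hinv, hlrm, pow_zero, pow_one, one_mul]

lemma subT_one_IPoly (m : ℕ) :
    subT 1 (IPoly m) = ∑ τ ∈ Av m, X 0 ^ (invPerm τ + lrm τ) * X 1 ^ lrm τ := by
  simp only [IPoly, subT, map_sum, map_mul, map_pow, bind₁_X_right, pow_one]
  refine sum_congr rfl fun τ _ => ?_
  simp only [if_pos, one_ne_zero, if_false, mul_pow, pow_add]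
  ring

lemma indecPoly_succ (hm : 0 < m) : indecPoly (m + 1) = subT 1 (IPoly m) := by
  rw [subT_one_IPoly, indecPoly]
  symm
  refine sum_nbij' expand contract ?_ ?_ ?_ ?_ ?_
  · intro τ hτ
    rw [mem_Av] at hτ
    exact mem_filter.2 ⟨mem_Av.2 (avoids321_expand_iff.2 hτ), firstSplit_expand τ⟩
  · intro ρ hρ
    rw [mem_filter, mem_Av] at hρ
    rw [mem_Av, ← avoids321_expand_iff, expand_contract hρ.1 hρ.2 hm]
    exact hρ.1
  · intro τ _
    exact contract_expand τ
  · intro ρ hρ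
    rw [mem_filter, mem_Av] at hρ
    exact expand_contract hρ.1 hρ.2 hm
  · intro τ hτ
    rw [weight, invPerm_expand (mem_Av.1 hτ), lrm_expand hm]

end GeneratingFunction

end Av321

open Av321 in
/-- for n ≥ 1,
`I_n(q,t) = t·I_{n-1}(q,t) + Σ_{k=0}^{n-2} I_k(q,t)·I_{n-1-k}(q,qt)`. -/
theorem stmt16 (n : ℕ) (hn : 1 ≤ n) :
    IPoly n = X 1 * IPoly (n - 1) +
      ∑ k ∈ Finset.range (n - 1), IPoly k * subT 1 (IPoly (n - 1 - k)) := by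
  have hIcc : Icc 1 n = insert 1 (Icc 2 n) := by
    ext c
    simp only [mem_Icc, mem_insert]
    omega
  rw [IPoly_eq_sum_indecPoly hn, hIcc, sum_insert (by simp), indecPoly_one]
  congr 1
  refine sum_nbij' (fun c => n - c) (fun k => n - k) ?_ ?_ ?_ ?_ fun c hc => ?_
  · intro c hc; simp only [mem_Icc, mem_range] at hc ⊢; omega
  · intro k hk; simp only [mem_Icc, mem_range] at hk ⊢; omega
  · intro c hc; simp only [mem_Icc] at hc; omega
  · intro k hk; simp only [mem_range] at hk; omega
  · rw [mem_Icc] at hc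
    obtain ⟨m, rfl⟩ : ∃ m, c = m + 1 := ⟨c - 1, by omega⟩
    rw [indecPoly_succ (by omega), mul_comm, show n - 1 - (n - (m + 1)) = m by omega]
end

section
/- For every integer n ≥ 1, Σ_{σ∈Av_{2n}(321)} (−1)^{inv σ} = 0 and Σ_{σ∈Av_{2n+1}(321)} (−1)^{inv σ} = C_n, where C_n = (1/(n+1))·binom(2n,n) is the n-th Catalan number. -/
open Finset MvPolynomial

/-!
Every 321-avoiding permutation of `Fin (n + 1)` arises exactly once by inserting the maximum into
a 321-avoiding `σ : Perm (Fin n)` at a position `p ≥ tailStart σ`, the start of the longest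
increasing suffix of `σ`. The insertion adds `n - p` inversions and moves the start of the suffix
to `p + 1`, or leaves it in place when `p = n`. The signed counts refined by the start of the
suffix therefore satisfy a triangular recurrence, which is solved by the Catalan triangle
`ballot`: on `Av (2m+1)` the count for start `2i` is `ballot m i` and for odd starts it is `0`;
on `Av (2m+2)` the counts for starts `2i` and `2i+1` are `± ballot (m+1) i`. Summing over the
start, the even case collapses to `ballot (m+1) (m+1) = 0` and the odd case is the row sum
`ballot (m+1) m = catalan m`.
-/

open Equiv

section InsertMax

variable {n : ℕ}

lemma Fin.lt_succAbove_iff_le_val (p : Fin (n + 1)) (a : Fin n) :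
    p < p.succAbove a ↔ (p : ℕ) ≤ a := by
  rw [Fin.lt_succAbove_iff_le_castSucc, Fin.le_def, Fin.val_castSucc]

-- `finSuccEquiv' p` sends `p` to `none` and the other positions, in order, to `some _`.
def insertMax (σ : Perm (Fin n)) (p : Fin (n + 1)) : Perm (Fin (n + 1)) :=
  (finSuccEquiv' p).trans (σ.optionCongr.trans (finSuccEquiv' (Fin.last n)).symm)

@[simp]
lemma insertMax_apply_self (σ : Perm (Fin n)) (p : Fin (n + 1)) :
    insertMax σ p p = Fin.last n := by
  simp [insertMax]

@[simp]
lemma insertMax_apply_succAbove (σ : Perm (Fin n)) (p : Fin (n + 1)) (a : Fin n) :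
    insertMax σ p (p.succAbove a) = (σ a).castSucc := by
  simp [insertMax, Fin.succAbove_last]

@[simp]
lemma insertMax_symm_last (σ : Perm (Fin n)) (p : Fin (n + 1)) :
    (insertMax σ p).symm (Fin.last n) = p := by
  simp [insertMax, ← optionCongr_symm]

lemma insertMax_apply_lt_last (σ : Perm (Fin n)) {p x : Fin (n + 1)} (hx : x ≠ p) :
    insertMax σ p x < Fin.last n := by
  obtain ⟨a, rfl⟩ := Fin.exists_succAbove_eq hx
  simp [Fin.castSucc_lt_last]

def eraseMax (τ : Perm (Fin (n + 1))) : Perm (Fin n) :=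
  removeNone ((finSuccEquiv' (τ.symm (Fin.last n))).symm.trans
    (τ.trans (finSuccEquiv' (Fin.last n))))

lemma eraseMax_insertMax (σ : Perm (Fin n)) (p : Fin (n + 1)) :
    eraseMax (insertMax σ p) = σ := by
  have : (finSuccEquiv' p).symm.trans ((insertMax σ p).trans (finSuccEquiv' (Fin.last n))) =
      σ.optionCongr := by
    ext x : 1
    simp [insertMax]
  rw [eraseMax, insertMax_symm_last, this, removeNone_optionCongr]

lemma insertMax_eraseMax (τ : Perm (Fin (n + 1))) :
    insertMax (eraseMax τ) (τ.symm (Fin.last n)) = τ := by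
  set e : Perm (Option (Fin n)) := (finSuccEquiv' (τ.symm (Fin.last n))).symm.trans
    (τ.trans (finSuccEquiv' (Fin.last n)))
  have he : (eraseMax τ).optionCongr = e := by
    rw [eraseMax, _root_.map_equiv_removeNone]
    simp [e, swap_self, Perm.one_def]
  ext x : 1
  simp [insertMax, he, e]

def insertMaxEquiv : Perm (Fin n) × Fin (n + 1) ≃ Perm (Fin (n + 1)) where
  toFun x := insertMax x.1 x.2
  invFun τ := (eraseMax τ, τ.symm (Fin.last n))
  left_inv x := by simp [eraseMax_insertMax]
  right_inv τ := insertMax_eraseMax τ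

lemma invPerm_eq_sum (σ : Perm (Fin n)) :
    invPerm σ = ∑ i, ∑ j, if i < j ∧ σ j < σ i then 1 else 0 := by
  rw [invPerm, card_filter, Fintype.sum_prod_type]

lemma invPerm_insertMax (σ : Perm (Fin n)) (p : Fin (n + 1)) :
    invPerm (insertMax σ p) = invPerm σ + (n - p) := by
  have inversions_from_max :
      (∑ j, if p < j ∧ insertMax σ p j < insertMax σ p p then 1 else 0) = n - p := by
    have : ∀ j, (p < j ∧ insertMax σ p j < insertMax σ p p ↔ j ∈ Ioi p) := fun j => by
      simpa using fun h : p < j => insertMax_apply_lt_last σ h.ne'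
    simp only [this, sum_boole, Fin.card_Ioi, Nat.cast_id, filter_mem_eq_inter, univ_inter]
    omega
  rw [invPerm_eq_sum, Fin.sum_univ_succAbove _ p, inversions_from_max, add_comm, invPerm_eq_sum]
  congr 1
  refine sum_congr rfl fun a _ => ?_
  simp [Fin.sum_univ_succAbove _ p, (Fin.le_last _).not_gt]

lemma avoids321_insertMax_iff {σ : Perm (Fin n)} {p : Fin (n + 1)} :
    Avoids321 (insertMax σ p) ↔ Avoids321 σ ∧ StrictMonoOn σ {a | (p : ℕ) ≤ a} := by
  refine ⟨fun h => ⟨?_, ?_⟩, ?_⟩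
  · rintro ⟨i, j, k, hij, hjk, hkj, hji⟩
    exact h ⟨p.succAbove i, p.succAbove j, p.succAbove k,
      by simpa, by simpa, by simpa, by simpa⟩
  · intro a ha b _ hab
    by_contra! hba
    have hdesc : σ b < σ a := hba.lt_of_ne (σ.injective.ne hab.ne')
    exact h ⟨p, p.succAbove a, p.succAbove b, (Fin.lt_succAbove_iff_le_val p a).mpr ha,
      by simpa, by simpa using hdesc, by simp [Fin.castSucc_lt_last]⟩
  · rintro ⟨hσ, hmono⟩ ⟨i, j, k, hij, hjk, hkj, hji⟩
    have hj : j ≠ p := by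
      rintro rfl
      exact (Fin.le_last _).not_gt (by simpa using hji)
    have hk : k ≠ p := by
      rintro rfl
      exact (Fin.le_last _).not_gt (by simpa using hkj)
    obtain ⟨b, rfl⟩ := Fin.exists_succAbove_eq hj
    obtain ⟨c, rfl⟩ := Fin.exists_succAbove_eq hk
    rcases Fin.eq_self_or_eq_succAbove p i with rfl | ⟨a, rfl⟩
    · have hb : (i : ℕ) ≤ b := (Fin.lt_succAbove_iff_le_val i b).mp hij
      have hbc : b < c := by simpa using hjk
      exact (hmono hb (hb.trans hbc.le) hbc).not_gt (by simpa using hkj)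
    · exact hσ ⟨a, b, c, by simpa using hij, by simpa using hjk, by simpa using hkj,
        by simpa using hji⟩

noncomputable def tailStart (σ : Perm (Fin n)) : ℕ :=
  sInf {k | StrictMonoOn σ {a | k ≤ (a : ℕ)}}

lemma strictMonoOn_length_le (σ : Perm (Fin n)) : StrictMonoOn σ {a | n ≤ (a : ℕ)} :=
  fun a ha => absurd a.isLt ha.not_gt

lemma tailStart_le_iff {σ : Perm (Fin n)} {k : ℕ} :
    tailStart σ ≤ k ↔ StrictMonoOn σ {a | k ≤ (a : ℕ)} := by
  have hne : {k | StrictMonoOn σ {a : Fin n | k ≤ (a : ℕ)}}.Nonempty :=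
    ⟨n, strictMonoOn_length_le σ⟩
  exact ⟨fun h => (Nat.sInf_mem hne).mono fun a ha => h.trans ha, fun h => Nat.sInf_le h⟩

lemma tailStart_le (σ : Perm (Fin n)) : tailStart σ ≤ n :=
  tailStart_le_iff.mpr (strictMonoOn_length_le σ)

lemma tailStart_insertMax_last (σ : Perm (Fin n)) :
    tailStart (insertMax σ (Fin.last n)) = tailStart σ := by
  have apply_castSucc (a : Fin n) : insertMax σ (Fin.last n) a.castSucc = (σ a).castSucc := by
    simpa [Fin.succAbove_last] using insertMax_apply_succAbove σ (Fin.last n) a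
  refine eq_of_forall_ge_iff fun k => ?_
  simp only [tailStart_le_iff]
  constructor
  · intro h a ha b hb hab
    simpa [apply_castSucc] using
      h (a := a.castSucc) (b := b.castSucc) (by simpa using ha) (by simpa using hb) (by simpa)
  · intro h x hx y hy hxy
    rcases Fin.eq_castSucc_or_eq_last x with ⟨a, rfl⟩ | rfl
    · rcases Fin.eq_castSucc_or_eq_last y with ⟨b, rfl⟩ | rfl
      · simpa [apply_castSucc] using h (a := a) hx hy (by simpa using hxy)
      · simp [apply_castSucc, Fin.castSucc_lt_last]
    · exact absurd hxy (Fin.le_last y).not_gt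

lemma tailStart_insertMax_of_lt {σ : Perm (Fin n)} {p : Fin (n + 1)} (hp : (p : ℕ) < n)
    (hσ : StrictMonoOn σ {a | (p : ℕ) ≤ a}) : tailStart (insertMax σ p) = p + 1 := by
  refine eq_of_forall_ge_iff fun k => ?_
  rw [tailStart_le_iff]
  constructor
  · intro h
    by_contra! hk
    replace hk : k ≤ p := Nat.lt_succ_iff.mp hk
    have hnext : p < p.succAbove ⟨p, hp⟩ := (Fin.lt_succAbove_iff_le_val p _).mpr le_rfl
    have := h hk (hk.trans hnext.le) hnext
    simp only [insertMax_apply_self, insertMax_apply_succAbove] at this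
    exact (Fin.le_last _).not_gt this
  · intro hk x hx y hy hxy
    have hxp : p < x := Nat.lt_of_lt_of_le (Nat.lt_succ_self _) (hk.trans hx)
    obtain ⟨a, rfl⟩ := Fin.exists_succAbove_eq hxp.ne'
    obtain ⟨b, rfl⟩ := Fin.exists_succAbove_eq (hxp.trans hxy).ne'
    have ha := (Fin.lt_succAbove_iff_le_val p a).mp hxp
    have hab : a < b := by simpa using hxy
    simpa using hσ ha (ha.trans hab.le) hab

lemma sum_Av_succ {M : Type*} [AddCommMonoid M] (w : Perm (Fin (n + 1)) → M) :
    ∑ τ ∈ Av (n + 1), w τ =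
      ∑ σ ∈ Av n, ∑ p : Fin (n + 1),
        if tailStart σ ≤ p then w (insertMax σ p) else 0 := by
  rw [Av, sum_filter, ← insertMaxEquiv.sum_comp, Fintype.sum_prod_type, Av, sum_filter]
  refine sum_congr rfl fun σ _ => ?_
  by_cases hσ : Avoids321 σ <;>
    simp [insertMaxEquiv, avoids321_insertMax_iff, tailStart_le_iff, hσ]

end InsertMax

noncomputable def signedTailCount (n j : ℕ) : ℤ :=
  ∑ σ ∈ Av n with tailStart σ = j, (-1) ^ invPerm σ

lemma sum_range_signedTailCount (n i : ℕ) :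
    ∑ k ∈ range (i + 1), signedTailCount n k =
      ∑ σ ∈ Av n with tailStart σ ≤ i, (-1) ^ invPerm σ := by
  simp only [signedTailCount, sum_filter]
  rw [sum_comm]
  refine sum_congr rfl fun σ _ => ?_
  simp only [sum_ite_eq, mem_range, Nat.lt_succ_iff]

lemma signedTailCount_zero (j : ℕ) : signedTailCount 0 j = if j = 0 then 1 else 0 := by
  have hAv : Av 0 = {1} := by
    ext σ; simp [Av, Avoids321, Subsingleton.elim σ 1]
  have ht : tailStart (1 : Perm (Fin 0)) = 0 := Nat.le_zero.mp (tailStart_le 1)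
  rw [signedTailCount, hAv, filter_singleton, ht]
  split_ifs <;> first | omega | simp [invPerm]

lemma signedTailCount_succ (n j : ℕ) :
    signedTailCount (n + 1) j = signedTailCount n j +
      ∑ q : Fin n, if (q : ℕ) + 1 = j then
        (-1) ^ (n - q) * ∑ σ ∈ Av n with tailStart σ ≤ q, (-1) ^ invPerm σ else 0 := by
  have insert_last (σ : Perm (Fin n)) :
      (if tailStart σ ≤ n then if tailStart (insertMax σ (Fin.last n)) = j then
        (-1 : ℤ) ^ invPerm (insertMax σ (Fin.last n)) else 0 else 0) =
      if tailStart σ = j then (-1) ^ invPerm σ else 0 := by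
    simp [tailStart_le, tailStart_insertMax_last, invPerm_insertMax]
  have insert_castSucc (σ : Perm (Fin n)) (q : Fin n) :
      (if tailStart σ ≤ q then if tailStart (insertMax σ q.castSucc) = j then
        (-1 : ℤ) ^ invPerm (insertMax σ q.castSucc) else 0 else 0) =
      if (q : ℕ) + 1 = j then (-1) ^ (n - q) * if tailStart σ ≤ q then (-1) ^ invPerm σ else 0
        else 0 := by
    by_cases hq : tailStart σ ≤ q
    · rw [if_pos hq, tailStart_insertMax_of_lt (by simp) (tailStart_le_iff.mp hq),
        invPerm_insertMax]
      simp [hq, pow_add, mul_comm]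
    · simp [hq]
  rw [signedTailCount, sum_filter, sum_Av_succ]
  simp only [Fin.sum_univ_castSucc, Fin.val_castSucc, Fin.val_last, insert_last,
    insert_castSucc, sum_add_distrib]
  rw [add_comm, sum_comm, signedTailCount, sum_filter]
  congr 1
  refine sum_congr rfl fun q _ => ?_
  split_ifs <;> simp [mul_sum, sum_filter]

lemma signedTailCount_succ_zero (n : ℕ) : signedTailCount (n + 1) 0 = signedTailCount n 0 := by
  simp [signedTailCount_succ n 0]

lemma signedTailCount_succ_succ (n i : ℕ) :
    signedTailCount (n + 1) (i + 1) = signedTailCount n (i + 1) +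
      if i < n then (-1) ^ (n - i) * ∑ k ∈ range (i + 1), signedTailCount n k else 0 := by
  simp only [signedTailCount_succ, add_left_cancel_iff, add_right_cancel_iff,
    sum_range_signedTailCount]
  rw [Fin.sum_univ_eq_sum_range (fun q => if q = i then
    (-1) ^ (n - q) * ∑ σ ∈ Av n with tailStart σ ≤ q, (-1 : ℤ) ^ invPerm σ else 0) n]
  simp [sum_ite_eq']

/-- The ballot numbers (the Catalan triangle): `ballot m i` counts the lattice paths from
`(0, 0)` to `(m - 1, i)` that stay weakly below the diagonal, for `i < m`. -/
def ballot : ℕ → ℕ → ℤ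
  | 0, i => if i = 0 then 1 else 0
  | m + 1, i => if i ≤ m then ∑ k ∈ range (i + 1), ballot m k else 0

lemma ballot_zero_right (m : ℕ) : ballot m 0 = 1 := by
  induction m with
  | zero => rfl
  | succ m ih => simp [ballot, ih]

lemma ballot_eq_zero {m i : ℕ} (hm : m ≤ i) (hi : 0 < i) : ballot m i = 0 := by
  cases m with
  | zero => simp [ballot, hi.ne']
  | succ m => simp [ballot, show ¬ i ≤ m by omega]

lemma sum_range_ballot (m : ℕ) : ∑ i ∈ range (m + 1), ballot m i = ballot (m + 1) m := by
  simp [ballot]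

lemma ballot_succ_succ {m i : ℕ} (hi : i < m) :
    ballot (m + 1) (i + 1) = ballot (m + 1) i + ballot m (i + 1) := by
  simp [ballot, hi.le, Nat.succ_le_of_lt hi, sum_range_succ _ (i + 1)]

lemma ballot_eq_choose_sub : ∀ {m i : ℕ}, i < m →
    ballot m (i + 1) = ((m + i).choose (i + 1) : ℤ) - (m + i).choose i
  | m + 1, i, hi => by
    rcases (Nat.lt_succ_iff.mp hi).lt_or_eq with hi | rfl
    · rw [ballot_succ_succ hi, ballot_eq_choose_sub hi]
      cases i with
      | zero => simp [ballot_zero_right]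
      | succ i =>
        rw [ballot_eq_choose_sub (Nat.lt_succ_of_lt (Nat.lt_of_succ_lt hi)),
          show m + 1 + (i + 1) = (m + i + 1) + 1 by ring, show m + 1 + i = m + i + 1 by ring,
          show m + (i + 1) = m + i + 1 by ring, Nat.choose_succ_succ' (m + i + 1) (i + 1),
          Nat.choose_succ_succ' (m + i + 1) i]
        push_cast
        ring
    · rw [ballot_eq_zero le_rfl i.succ_pos, show i + 1 + i = 2 * i + 1 by ring,
        Nat.choose_symm_half, sub_self]

lemma ballot_succ_self (n : ℕ) : ballot (n + 1) n = catalan n := by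
  cases n with
  | zero => simp [ballot]
  | succ n =>
    have hcat : ((n + 2) * catalan (n + 1) : ℤ) = (2 * (n + 1)).choose (n + 1) := by
      exact_mod_cast succ_mul_catalan_eq_centralBinom (n + 1)
    have hsymm : ((2 * (n + 1)).choose (n + 1) * (n + 1) : ℤ) =
        (2 * (n + 1)).choose n * (n + 2) := by
      have := Nat.choose_succ_right_eq (2 * (n + 1)) n
      rw [show 2 * (n + 1) - n = n + 2 by omega] at this
      exact_mod_cast this
    rw [ballot_eq_choose_sub (by omega), show n + 2 + n = 2 * (n + 1) by ring]
    apply mul_left_cancel₀ (show ((n : ℤ) + 2) ≠ 0 by positivity)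
    linear_combination hsymm - hcat

lemma sum_range_ite_even {M : Type*} [AddCommMonoid M] (f : ℕ → M) (i : ℕ) :
    ∑ k ∈ range (i + 1), (if Even k then f (k / 2) else 0) =
      ∑ k ∈ range (i / 2 + 1), f k := by
  induction i with
  | zero => simp
  | succ i ih =>
    rw [sum_range_succ, ih]
    rcases Nat.even_or_odd i with hi | hi
    · rw [if_neg (Nat.not_even_iff_odd.mpr hi.add_one), add_zero,
        show (i + 1) / 2 = i / 2 by obtain ⟨l, rfl⟩ := hi; omega]
    · rw [if_pos hi.add_one, show (i + 1) / 2 = i / 2 + 1 by obtain ⟨l, rfl⟩ := hi; omega,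
        sum_range_succ _ (i / 2 + 1)]

lemma sum_range_neg_one_pow_mul {R : Type*} [Ring R] (f : ℕ → R) (i : ℕ) :
    ∑ k ∈ range (i + 1), (-1) ^ k * f (k / 2) = if Even i then f (i / 2) else 0 := by
  induction i with
  | zero => simp
  | succ i ih =>
    rw [sum_range_succ, ih]
    rcases Nat.even_or_odd i with hi | hi
    · rw [if_pos hi, if_neg (Nat.not_even_iff_odd.mpr hi.add_one), hi.add_one.neg_one_pow,
        show (i + 1) / 2 = i / 2 by obtain ⟨l, rfl⟩ := hi; omega]
      simp
    · rw [if_neg (Nat.not_even_iff_odd.mpr hi), if_pos hi.add_one, hi.add_one.neg_one_pow]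
      simp

lemma signedTailCount_even_of_odd {m : ℕ}
    (hodd : ∀ j, signedTailCount (2 * m + 1) j = if Even j then ballot m (j / 2) else 0)
    (j : ℕ) : signedTailCount (2 * m + 2) j = (-1) ^ j * ballot (m + 1) (j / 2) := by
  cases j with
  | zero => simp [signedTailCount_succ_zero, hodd, ballot_zero_right]
  | succ i =>
    rw [signedTailCount_succ_succ, hodd, sum_congr rfl fun k _ => hodd k, sum_range_ite_even]
    obtain ⟨l, rfl | rfl⟩ := Nat.even_or_odd' i
    · rw [show (2 * l + 1) / 2 = l by omega, show 2 * l / 2 = l by omega]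
      by_cases hlm : l ≤ m
      · rw [show 2 * m + 1 - 2 * l = 2 * (m - l) + 1 by omega]
        simp [hlm, ballot, pow_succ, pow_mul]
      · simp [hlm, ballot, show ¬ 2 * l < 2 * m + 1 by omega]
    · rw [show (2 * l + 1 + 1) / 2 = l + 1 by omega, show (2 * l + 1) / 2 = l by omega]
      by_cases hlm : l < m
      · rw [show 2 * m + 1 - (2 * l + 1) = 2 * (m - l) by omega]
        have h_even : Even (2 * l + 1 + 1) := ⟨l + 1, by ring⟩
        simp [h_even, hlm, ballot, pow_mul, sum_range_succ _ (l + 1)]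
        ring
      · simp [hlm, ballot, Nat.even_add_one, ballot_eq_zero (show m ≤ l + 1 by omega)]

lemma signedTailCount_odd_of_even {m : ℕ}
    (heven : ∀ j, signedTailCount (2 * m + 2) j = (-1) ^ j * ballot (m + 1) (j / 2))
    (j : ℕ) : signedTailCount (2 * m + 3) j = if Even j then ballot (m + 1) (j / 2) else 0 := by
  cases j with
  | zero => simp [signedTailCount_succ_zero, heven, ballot_zero_right]
  | succ i =>
    rw [signedTailCount_succ_succ, heven, sum_congr rfl fun k _ => heven k,
      sum_range_neg_one_pow_mul]
    obtain ⟨l, rfl | rfl⟩ := Nat.even_or_odd' i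
    · rw [show (2 * l + 1) / 2 = l by omega, show 2 * l / 2 = l by omega]
      by_cases hlm : l ≤ m
      · rw [show 2 * m + 2 - 2 * l = 2 * (m - l + 1) by omega]
        simp [pow_succ, pow_mul, show 2 * l < 2 * m + 2 by omega]
      · simp [pow_succ, ballot_eq_zero (show m + 1 ≤ l by omega) (by omega)]
    · rw [show (2 * l + 1 + 1) / 2 = l + 1 by omega]
      simp [pow_succ, pow_mul, Nat.even_add_one]

lemma signedTailCount_two_mul_add_one (m j : ℕ) :
    signedTailCount (2 * m + 1) j = if Even j then ballot m (j / 2) else 0 := by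
  induction m generalizing j with
  | zero =>
    cases j with
    | zero => simp [signedTailCount_succ_zero, signedTailCount_zero, ballot]
    | succ i =>
      rw [signedTailCount_succ_succ, if_neg (Nat.not_lt_zero i), add_zero, signedTailCount_zero,
        if_neg i.succ_ne_zero]
      split_ifs with h_even
      · obtain ⟨k, hk⟩ := h_even
        rw [ballot_eq_zero (Nat.zero_le _) (by omega)]
      · rfl
  | succ m ih => exact signedTailCount_odd_of_even (signedTailCount_even_of_odd ih) j

lemma sum_range_signedTailCount_self (n : ℕ) :
    ∑ k ∈ range (n + 1), signedTailCount n k = ∑ σ ∈ Av n, (-1) ^ invPerm σ := by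
  rw [sum_range_signedTailCount, filter_true_of_mem fun σ _ => tailStart_le σ]

lemma sum_Av_two_mul_add_two (m : ℕ) :
    ∑ σ ∈ Av (2 * m + 2), (-1 : ℤ) ^ invPerm σ = 0 := by
  rw [← sum_range_signedTailCount_self,
    sum_congr rfl fun j _ => signedTailCount_even_of_odd (signedTailCount_two_mul_add_one m) j,
    sum_range_neg_one_pow_mul, if_pos ⟨m + 1, by ring⟩, show (2 * m + 2) / 2 = m + 1 by omega,
    ballot_eq_zero le_rfl m.succ_pos]

lemma sum_Av_two_mul_add_one (n : ℕ) :
    ∑ σ ∈ Av (2 * n + 1), (-1 : ℤ) ^ invPerm σ = catalan n := by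
  rw [← sum_range_signedTailCount_self,
    sum_congr rfl fun j _ => signedTailCount_two_mul_add_one n j, sum_range_ite_even,
    show (2 * n + 1) / 2 = n by omega, sum_range_ballot, ballot_succ_self]

/-- Simion–Schmidt signed enumeration:
`Σ_{σ∈Av_{2n}(321)} (-1)^{inv σ} = 0` and `Σ_{σ∈Av_{2n+1}(321)} (-1)^{inv σ} = C_n`. -/
theorem stmt17 (n : ℕ) (hn : 1 ≤ n) :
    (∑ σ ∈ Av (2 * n), (-1 : ℤ) ^ invPerm σ) = 0 ∧
      (∑ σ ∈ Av (2 * n + 1), (-1 : ℤ) ^ invPerm σ) = catalan n := by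
  obtain ⟨m, rfl⟩ : ∃ m, n = m + 1 := ⟨n - 1, by omega⟩
  exact ⟨sum_Av_two_mul_add_two m, sum_Av_two_mul_add_one (m + 1)⟩
end
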